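/- arXiv:1603.04472 — 9 statements merged into one kernel-verified Lean document; each statement's English description precedes it below -/
import Mathlib

section
/- Let C ⊆ [0,1] be a set, let S be a σ-algebra of subsets of [0,1] such that [c,d] ∩ C ∈ S for all real c, d with 0 ≤ c < d ≤ 1, and let μ be a probability measure on ([0,1], S) such that μ([c,d] ∩ C) = d − c for all real c, d with 0 ≤ c < d ≤ 1. Then the infinite product measure μ^∞ of the set of all sequences (x_k)_{k≥1} ∈ [0,1]^ℕ that are C-uniformly distributed equals 1. -/
/-!
By the strong law of large numbers, applied to the i.i.d. indicators of `[c,d] ∩ C` under the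
coordinates of `μ^∞`, almost every sequence has the right limiting frequency for each fixed
pair `c < d`. Countably many rational pairs can be handled at once, and the frequencies of
`[c,d] ∩ C` are monotone in the interval, so squeezing between rational intervals gives every
real pair.
-/

open Filter Topology MeasureTheory

/-- A sequence `x` of points of `[0,1]` is `C`-uniformly distributed if for all
`0 ≤ c < d ≤ 1` the relative frequency of indices `k < n` with `x k ∈ [c,d] ∩ C`
tends to `d - c`. -/
def IsUDSeq (C : Set ℝ) (x : ℕ → ℝ) : Prop :=
  ∀ c d : ℝ, 0 ≤ c → c < d → d ≤ 1 →
    Tendsto (fun n : ℕ => (Set.ncard {k : ℕ | k < n ∧ x k ∈ Set.Icc c d ∩ C} : ℝ) / n)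
      atTop (𝓝 (d - c))

open ProbabilityTheory

-- Definitionally the frequency used in `IsUDSeq` (so `0` at `n = 0`).
noncomputable def empiricalFreq {α : Type*} (s : Set α) (f : ℕ → α) (n : ℕ) : ℝ :=
  {k : ℕ | k < n ∧ f k ∈ s}.ncard / n

section empiricalFreq

variable {α : Type*}

theorem empiricalFreq_mono {s t : Set α} (hst : s ⊆ t) (f : ℕ → α) (n : ℕ) :
    empiricalFreq s f n ≤ empiricalFreq t f n := by
  unfold empiricalFreq
  gcongr
  exact (Set.finite_Iio n).subset fun k hk => hk.1

theorem empiricalFreq_eq_sum_indicator (s : Set α) (f : ℕ → α) (n : ℕ) :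
    empiricalFreq s f n = (∑ i ∈ Finset.range n, s.indicator (fun _ => (1 : ℝ)) (f i)) / n := by
  classical
  have hfilter : {k : ℕ | k < n ∧ f k ∈ s} = ↑((Finset.range n).filter (fun k => f k ∈ s)) := by
    ext k; simp
  rw [empiricalFreq, hfilter, Set.ncard_coe_finset]
  simp only [Set.indicator_apply, Finset.sum_boole]

end empiricalFreq

theorem exists_rat_mem_Ioc_of_nonneg {c δ : ℝ} (hc : 0 ≤ c) (hδ : 0 < δ) :
    ∃ q : ℚ, 0 ≤ (q : ℝ) ∧ (q : ℝ) ≤ c ∧ c - δ < q := by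
  rcases hc.eq_or_lt with rfl | hc
  · exact ⟨0, by simp, by simp, by simpa using hδ⟩
  · obtain ⟨q, hq₁, hq₂⟩ := exists_rat_btwn (max_lt (sub_lt_self c hδ) hc)
    exact ⟨q, (le_max_right _ _).trans hq₁.le, hq₂.le, (le_max_left _ _).trans_lt hq₁⟩

theorem exists_rat_mem_Ico_of_le_one {d δ : ℝ} (hd : d ≤ 1) (hδ : 0 < δ) :
    ∃ r : ℚ, d ≤ (r : ℝ) ∧ (r : ℝ) ≤ 1 ∧ (r : ℝ) < d + δ := by
  obtain ⟨q, hq₀, hq₁, hq₂⟩ := exists_rat_mem_Ioc_of_nonneg (sub_nonneg.2 hd) hδ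
  exact ⟨1 - q, by push_cast; linarith, by push_cast; linarith, by push_cast; linarith⟩

theorem tendsto_empiricalFreq_of_rat {α : Type*} (G : ℝ → ℝ → Set α)
    (hG : ∀ c d c' d' : ℝ, c' ≤ c → d ≤ d' → G c d ⊆ G c' d') (f : ℕ → α)
    (h : ∀ q r : ℚ, 0 ≤ (q : ℝ) → (q : ℝ) < r → (r : ℝ) ≤ 1 →
      Tendsto (empiricalFreq (G q r) f) atTop (𝓝 ((r : ℝ) - q)))
    {c d : ℝ} (hc : 0 ≤ c) (hcd : c < d) (hd : d ≤ 1) :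
    Tendsto (empiricalFreq (G c d) f) atTop (𝓝 (d - c)) := by
  refine tendsto_order.2 ⟨fun a ha => ?_, fun b hb => ?_⟩
  · obtain ⟨ε, hε, haε⟩ : ∃ ε > 0, max a 0 = d - c - 2 * ε :=
      ⟨(d - c - max a 0) / 2, by linarith [max_lt ha (sub_pos.2 hcd)], by ring⟩
    obtain ⟨q, hcq, hq⟩ := exists_rat_btwn (lt_add_of_pos_right c hε)
    obtain ⟨r, hr, hrd⟩ := exists_rat_btwn (sub_lt_self d hε)
    have hlim := h q r (by linarith) (by linarith [le_max_right a 0]) (by linarith)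
    filter_upwards [(tendsto_order.1 hlim).1 a (by linarith [le_max_left a 0])] with n hn
    exact hn.trans_le (empiricalFreq_mono (hG _ _ _ _ hcq.le hrd.le) f n)
  · obtain ⟨ε, hε, hbε⟩ : ∃ ε > 0, b = d - c + 2 * ε :=
      ⟨(b - (d - c)) / 2, by linarith, by ring⟩
    obtain ⟨q, hq₀, hqc, hq⟩ := exists_rat_mem_Ioc_of_nonneg hc hε
    obtain ⟨r, hdr, hr₁, hr⟩ := exists_rat_mem_Ico_of_le_one hd hε
    have hlim := h q r hq₀ (by linarith) hr₁
    filter_upwards [(tendsto_order.1 hlim).2 b (by linarith)] with n hn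
    exact (empiricalFreq_mono (hG _ _ _ _ hqc hdr) f n).trans_lt hn

def IsInfiniteProduct {α : Type*} [MeasurableSpace α] (μ : Measure α) (P : Measure (ℕ → α)) :
    Prop :=
  ∀ (s : Finset ℕ) (A : ℕ → Set α), (∀ i ∈ s, MeasurableSet (A i)) →
    P {f | ∀ i ∈ s, f i ∈ A i} = ∏ i ∈ s, μ (A i)

namespace IsInfiniteProduct

variable {α : Type*} [MeasurableSpace α] {μ : Measure α} {P : Measure (ℕ → α)}

theorem isProbabilityMeasure (hP : IsInfiniteProduct μ P) : IsProbabilityMeasure P :=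
  ⟨by simpa using hP ∅ (fun _ => ∅) (by simp)⟩

theorem measure_preimage_eval (hP : IsInfiniteProduct μ P) (i : ℕ) {A : Set α}
    (hA : MeasurableSet A) : P ((fun f : ℕ → α => f i) ⁻¹' A) = μ A := by
  simpa [Set.preimage] using hP {i} (fun _ => A) (fun _ _ => hA)

theorem map_eval (hP : IsInfiniteProduct μ P) (i : ℕ) : P.map (fun f : ℕ → α => f i) = μ := by
  ext A hA
  rw [Measure.map_apply (measurable_pi_apply i) hA, hP.measure_preimage_eval i hA]

theorem isProbabilityMeasure_base (hP : IsInfiniteProduct μ P) : IsProbabilityMeasure μ := by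
  have := hP.isProbabilityMeasure
  rw [← hP.map_eval 0]
  exact Measure.isProbabilityMeasure_map (measurable_pi_apply 0).aemeasurable

theorem iIndepFun_eval (hP : IsInfiniteProduct μ P) :
    iIndepFun (fun i (f : ℕ → α) => f i) P := by
  rw [iIndepFun_iff_measure_inter_preimage_eq_mul]
  intro s A hA
  have hcyl : (⋂ i ∈ s, (fun f : ℕ → α => f i) ⁻¹' A i) = {f | ∀ i ∈ s, f i ∈ A i} := by
    ext f; simp
  rw [hcyl, hP s A hA]
  exact Finset.prod_congr rfl fun i hi => (hP.measure_preimage_eval i (hA i hi)).symm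

theorem ae_tendsto_empiricalFreq (hP : IsInfiniteProduct μ P) {A : Set α}
    (hA : MeasurableSet A) :
    ∀ᵐ f ∂P, Tendsto (empiricalFreq A f) atTop (𝓝 (μ.real A)) := by
  have := hP.isProbabilityMeasure_base
  set g : α → ℝ := A.indicator fun _ => 1
  have hg : Measurable g := measurable_const.indicator hA
  have hint : Integrable (g ∘ fun f : ℕ → α => f 0) P := by
    rw [← integrable_map_measure hg.aestronglyMeasurable (measurable_pi_apply 0).aemeasurable,
      hP.map_eval 0]
    exact (integrable_const 1).indicator hA
  have hindep : Pairwise (Function.onFun (· ⟂ᵢ[P] ·) fun i (f : ℕ → α) => g (f i)) :=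
    fun i j hij => (hP.iIndepFun_eval.indepFun hij).comp hg hg
  have hident : ∀ i, IdentDistrib (fun f : ℕ → α => g (f i)) (fun f => g (f 0)) P P := fun i =>
    IdentDistrib.comp ⟨(measurable_pi_apply i).aemeasurable, (measurable_pi_apply 0).aemeasurable,
      (hP.map_eval i).trans (hP.map_eval 0).symm⟩ hg
  have hmean : ∫ f, g (f 0) ∂P = μ.real A := by
    rw [← integral_map (measurable_pi_apply 0).aemeasurable hg.aestronglyMeasurable,
      hP.map_eval 0, integral_indicator_const 1 hA, smul_eq_mul, mul_one]
  filter_upwards [strong_law_ae_real _ hint hindep hident] with f hf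
  rw [← hmean, funext (empiricalFreq_eq_sum_indicator A f)]
  exact hf

theorem ae_forall_tendsto_empiricalFreq (hP : IsInfiniteProduct μ P) (G : ℝ → ℝ → Set α)
    (hG : ∀ c d c' d' : ℝ, c' ≤ c → d ≤ d' → G c d ⊆ G c' d')
    (hmeas : ∀ c d : ℝ, 0 ≤ c → c < d → d ≤ 1 → MeasurableSet (G c d))
    (hval : ∀ c d : ℝ, 0 ≤ c → c < d → d ≤ 1 → μ (G c d) = ENNReal.ofReal (d - c)) :
    ∀ᵐ f ∂P, ∀ c d : ℝ, 0 ≤ c → c < d → d ≤ 1 →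
      Tendsto (empiricalFreq (G c d) f) atTop (𝓝 (d - c)) := by
  have hrat : ∀ᵐ f ∂P, ∀ q r : ℚ, 0 ≤ (q : ℝ) → (q : ℝ) < r → (r : ℝ) ≤ 1 →
      Tendsto (empiricalFreq (G q r) f) atTop (𝓝 ((r : ℝ) - q)) := by
    refine ae_all_iff.2 fun q => ae_all_iff.2 fun r => ?_
    by_cases hqr : 0 ≤ (q : ℝ) ∧ (q : ℝ) < r ∧ (r : ℝ) ≤ 1
    · obtain ⟨hq, hlt, hr⟩ := hqr
      filter_upwards [hP.ae_tendsto_empiricalFreq (hmeas q r hq hlt hr)] with f hf _ _ _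
      rwa [measureReal_def, hval q r hq hlt hr, ENNReal.toReal_ofReal (by linarith)] at hf
    · exact Eventually.of_forall fun f hq hlt hr => absurd ⟨hq, hlt, hr⟩ hqr
  filter_upwards [hrat] with f hf c d hc hcd hd
  exact tendsto_empiricalFreq_of_rat G hG f hf hc hcd hd

end IsInfiniteProduct

theorem stmt0_general (C : Set ℝ)
    (S : MeasurableSpace ↥(Set.Icc (0 : ℝ) 1))
    (μ : @Measure ↥(Set.Icc (0 : ℝ) 1) S)
    (hmeas : ∀ c d : ℝ, 0 ≤ c → c < d → d ≤ 1 →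
      MeasurableSet[S] {x : ↥(Set.Icc (0 : ℝ) 1) | (x : ℝ) ∈ Set.Icc c d ∩ C})
    (hval : ∀ c d : ℝ, 0 ≤ c → c < d → d ≤ 1 →
      μ {x : ↥(Set.Icc (0 : ℝ) 1) | (x : ℝ) ∈ Set.Icc c d ∩ C} = ENNReal.ofReal (d - c))
    (P : @Measure (ℕ → ↥(Set.Icc (0 : ℝ) 1))
      (@MeasurableSpace.pi ℕ (fun _ => ↥(Set.Icc (0 : ℝ) 1)) (fun _ => S)))
    (hP : ∀ (s : Finset ℕ) (A : ℕ → Set ↥(Set.Icc (0 : ℝ) 1)),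
      (∀ i ∈ s, MeasurableSet[S] (A i)) →
        P {f | ∀ i ∈ s, f i ∈ A i} = ∏ i ∈ s, μ (A i)) :
    P {x : ℕ → ↥(Set.Icc (0 : ℝ) 1) | IsUDSeq C (fun n => (x n : ℝ))} = 1 := by
  have hP' : IsInfiniteProduct (α := ↥(Set.Icc (0 : ℝ) 1)) μ P := hP
  have := hP'.isProbabilityMeasure
  have hae : ∀ᵐ x ∂P, IsUDSeq C fun n => (x n : ℝ) := hP'.ae_forall_tendsto_empiricalFreq
    (fun c d => {x : ↥(Set.Icc (0 : ℝ) 1) | (x : ℝ) ∈ Set.Icc c d ∩ C})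
    (fun c d c' d' hc hd x hx => ⟨Set.Icc_subset_Icc hc hd hx.1, hx.2⟩) hmeas hval
  exact (measure_congr (ae_eq_univ.2 (ae_iff.1 hae))).trans measure_univ

/-- if `C ⊆ [0,1]`, `S` is a σ-algebra on `[0,1]` containing the sets
`[c,d] ∩ C` for `0 ≤ c < d ≤ 1`, and `μ` is a probability measure on `([0,1], S)`
with `μ([c,d] ∩ C) = d - c` for all such `c, d`, then the infinite product measure
`μ^∞` (characterized by its values on cylinder sets; here `P` is any such product
measure on `[0,1]^ℕ` with the product σ-algebra, applied to an arbitrary set via its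
outer measure) of the set of all `C`-uniformly distributed sequences equals 1. -/
theorem stmt0 (C : Set ℝ) (hC : C ⊆ Set.Icc 0 1)
    (S : MeasurableSpace ↥(Set.Icc (0 : ℝ) 1))
    (μ : @Measure ↥(Set.Icc (0 : ℝ) 1) S)
    (hprob : μ Set.univ = 1)
    (hmeas : ∀ c d : ℝ, 0 ≤ c → c < d → d ≤ 1 →
      MeasurableSet[S] {x : ↥(Set.Icc (0 : ℝ) 1) | (x : ℝ) ∈ Set.Icc c d ∩ C})
    (hval : ∀ c d : ℝ, 0 ≤ c → c < d → d ≤ 1 →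
      μ {x : ↥(Set.Icc (0 : ℝ) 1) | (x : ℝ) ∈ Set.Icc c d ∩ C} = ENNReal.ofReal (d - c))
    (P : @Measure (ℕ → ↥(Set.Icc (0 : ℝ) 1))
      (@MeasurableSpace.pi ℕ (fun _ => ↥(Set.Icc (0 : ℝ) 1)) (fun _ => S)))
    (hP : ∀ (s : Finset ℕ) (A : ℕ → Set ↥(Set.Icc (0 : ℝ) 1)),
      (∀ i ∈ s, MeasurableSet[S] (A i)) →
        P {f | ∀ i ∈ s, f i ∈ A i} = ∏ i ∈ s, μ (A i)) :
    P {x : ℕ → ↥(Set.Icc (0 : ℝ) 1) | IsUDSeq C (fun n => (x n : ℝ))} = 1 :=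
  stmt0_general C S μ hmeas hval P hP
end

section
/- Let C ⊆ (0,1) be a set which is everywhere dense in (0,1). Then there exists a sequence (y_n)_{n≥1} of points of [0,1] which is C-uniformly distributed. -/
open Filter Topology

/-- A sequence `x` of points of `[0,1]` is `λ`-uniformly distributed if for all
`0 ≤ c < d ≤ 1` the relative frequency of indices `k < n` with `x k ∈ [c,d]`
tends to `d - c`. -/
def IsLambdaUDSeq (x : ℕ → ℝ) : Prop :=
  ∀ c d : ℝ, 0 ≤ c → c < d → d ≤ 1 →
    Tendsto (fun n : ℕ => (Set.ncard {k : ℕ | k < n ∧ x k ∈ Set.Icc c d} : ℝ) / n)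
      atTop (𝓝 (d - c))

/-!
Split the indices into the blocks `m ^ 2 ≤ n < (m + 1) ^ 2` of length `2 * m + 1`, and let the
`j`-th term of block `m` be a point of `C` in the `j`-th of the `2 * m + 1` equal subintervals of
`[0,1]`; density of `C` provides these points. A block of length `N` built this way puts
`N * (d - c) + O(1)` points into `[c, d]`, so the first `m ^ 2` terms put `m ^ 2 * (d - c) + O(m)`
points there, and by monotonicity of the counting function the first `n` terms put
`n * (d - c) + O(√n)` points there.
-/

open Finset

def gridCell (N j : ℕ) : Set ℝ := Set.Ioo (j / N) ((j + 1) / N)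

lemma exists_mem_gridCell {C : Set ℝ} (hdense : Set.Ioo (0 : ℝ) 1 ⊆ closure C) {N j : ℕ}
    (hj : j < N) : ∃ x ∈ C, x ∈ gridCell N j := by
  have hN : (0 : ℝ) < N := by exact_mod_cast hj.pos
  have hjN : (j : ℝ) + 1 ≤ N := by exact_mod_cast hj
  have hsub : gridCell N j ⊆ Set.Ioo 0 1 := Set.Ioo_subset_Ioo (by positivity)
    ((div_le_one hN).2 hjN)
  have hne : (gridCell N j).Nonempty := Set.nonempty_Ioo.2 (by gcongr; linarith)
  exact (closure_inter_open_nonempty_iff isOpen_Ioo).1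
    (hne.mono fun x hx => ⟨hdense (hsub hx), hx⟩)

section GridCount

variable {N : ℕ} {q : ℕ → ℝ} {c d : ℝ}

lemma card_filter_mem_Icc_le (hq : ∀ j < N, q j ∈ gridCell N j) (hc : 0 ≤ c) (hcd : c ≤ d) :
    (#{j ∈ range N | q j ∈ Set.Icc c d} : ℝ) ≤ N * (d - c) + 2 := by
  rcases N.eq_zero_or_pos with rfl | hN
  · simp
  have hN : (0 : ℝ) < N := by exact_mod_cast hN
  have hsub : {j ∈ range N | q j ∈ Set.Icc c d} ⊆ Ico ⌊N * c⌋₊ ⌈N * d⌉₊ := by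
    intro j hj
    obtain ⟨hjN, hcq, hqd⟩ := by simpa only [mem_filter, mem_range, Set.mem_Icc] using hj
    obtain ⟨hjq, hqj⟩ := hq j hjN
    rw [mem_Ico, ← Nat.lt_succ_iff, Nat.floor_lt' (Nat.succ_ne_zero j), Nat.lt_ceil]
    constructor
    · have := (lt_div_iff₀ hN).1 (hcq.trans_lt hqj)
      push_cast; linarith
    · have := (div_lt_iff₀ hN).1 (hjq.trans_le hqd)
      linarith
  have hle : ⌊N * c⌋₊ ≤ ⌈N * d⌉₊ :=
    (Nat.floor_le_floor (by gcongr)).trans (Nat.floor_le_ceil _)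
  calc (#{j ∈ range N | q j ∈ Set.Icc c d} : ℝ)
      ≤ (⌈N * d⌉₊ : ℝ) - ⌊N * c⌋₊ := by
        rw [← Nat.cast_sub hle, ← Nat.card_Ico]; exact_mod_cast card_le_card hsub
    _ ≤ N * d + 1 - (N * c - 1) := by
        gcongr
        · exact (Nat.ceil_lt_add_one (by have := hc.trans hcd; positivity)).le
        · exact (Nat.sub_one_lt_floor _).le
    _ = N * (d - c) + 2 := by ring

lemma le_card_filter_mem_Icc (hq : ∀ j < N, q j ∈ gridCell N j) (hc : 0 ≤ c) (hd : d ≤ 1) :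
    N * (d - c) - 2 ≤ (#{j ∈ range N | q j ∈ Set.Icc c d} : ℝ) := by
  rcases N.eq_zero_or_pos with rfl | hN
  · simp
  have hN : (0 : ℝ) < N := by exact_mod_cast hN
  have hsub : Ico ⌈N * c⌉₊ ⌊N * d⌋₊ ⊆ {j ∈ range N | q j ∈ Set.Icc c d} := by
    intro j hj
    rw [mem_Ico, Nat.ceil_le, Nat.lt_iff_add_one_le, Nat.le_floor_iff' (Nat.succ_ne_zero j)] at hj
    push_cast at hj
    have hjN : j < N := by
      have : (j : ℝ) + 1 ≤ N := hj.2.trans (by nlinarith)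
      exact_mod_cast (lt_add_one (j : ℝ)).trans_le this
    obtain ⟨hjq, hqj⟩ := hq j hjN
    simp only [mem_filter, mem_range, Set.mem_Icc]
    refine ⟨hjN, ?_, ?_⟩
    · exact ((le_div_iff₀ hN).2 (by linarith)).trans hjq.le
    · exact hqj.le.trans ((div_le_iff₀ hN).2 (by linarith))
  calc (N : ℝ) * (d - c) - 2 = (N * d - 1) - (N * c + 1) := by ring
    _ ≤ (⌊N * d⌋₊ : ℝ) - ⌈N * c⌉₊ := by
        gcongr
        · exact (Nat.sub_one_lt_floor _).le
        · exact (Nat.ceil_lt_add_one (by positivity)).le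
    _ ≤ #{j ∈ range N | q j ∈ Set.Icc c d} := by
        have := card_le_card hsub
        rw [Nat.card_Ico] at this
        rw [sub_le_iff_le_add]
        exact_mod_cast (by omega : ⌊N * d⌋₊ ≤ #{j ∈ range N | q j ∈ Set.Icc c d} + ⌈N * c⌉₊)

lemma abs_card_filter_mem_Icc_sub_le (hq : ∀ j < N, q j ∈ gridCell N j) (hc : 0 ≤ c)
    (hcd : c ≤ d) (hd : d ≤ 1) :
    |(#{j ∈ range N | q j ∈ Set.Icc c d} : ℝ) - N * (d - c)| ≤ 2 :=
  abs_sub_le_iff.2 ⟨by linarith [card_filter_mem_Icc_le hq hc hcd],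
    by linarith [le_card_filter_mem_Icc hq hc hd]⟩

end GridCount

lemma abs_card_filter_range_sq_sub_le {y : ℕ → ℝ}
    (hy : ∀ m, ∀ j < 2 * m + 1, y (m ^ 2 + j) ∈ gridCell (2 * m + 1) j) {c d : ℝ}
    (hc : 0 ≤ c) (hcd : c ≤ d) (hd : d ≤ 1) (m : ℕ) :
    |(#{k ∈ range (m ^ 2) | y k ∈ Set.Icc c d} : ℝ) - m ^ 2 * (d - c)| ≤ 2 * m := by
  induction m with
  | zero => simp
  | succ m ih =>
    have hsplit : #{k ∈ range ((m + 1) ^ 2) | y k ∈ Set.Icc c d} =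
        #{k ∈ range (m ^ 2) | y k ∈ Set.Icc c d} +
          #{j ∈ range (2 * m + 1) | y (m ^ 2 + j) ∈ Set.Icc c d} := by
      rw [show (m + 1) ^ 2 = m ^ 2 + (2 * m + 1) by ring, card_filter, card_filter, card_filter,
        sum_range_add]
    have hblock := abs_card_filter_mem_Icc_sub_le (hy m) hc hcd hd
    rw [hsplit]
    set A := #{k ∈ range (m ^ 2) | y k ∈ Set.Icc c d}
    set B := #{j ∈ range (2 * m + 1) | y (m ^ 2 + j) ∈ Set.Icc c d}
    push_cast at hblock ⊢
    calc |(A : ℝ) + B - ((m : ℝ) + 1) ^ 2 * (d - c)|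
        = |((A : ℝ) - m ^ 2 * (d - c)) + (B - (2 * m + 1) * (d - c))| := by congr 1; ring
      _ ≤ 2 * ((m : ℝ) + 1) := (abs_add_le _ _).trans (by linarith)

lemma sub_sqrt_sq_lt (n : ℕ) : n - n.sqrt ^ 2 < 2 * n.sqrt + 1 := by
  have := Nat.lt_succ_sqrt' n
  rw [Nat.succ_eq_add_one, add_sq] at this
  omega

lemma abs_sub_mul_le_of_abs_sq_sub_le {f : ℕ → ℕ} (hf : Monotone f) {L K : ℝ} (hL : 0 ≤ L)
    (h : ∀ m : ℕ, |(f (m ^ 2) : ℝ) - m ^ 2 * L| ≤ K * m) (n : ℕ) :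
    |(f n : ℝ) - n * L| ≤ (K + 2 * L) * (Nat.sqrt n + 1) := by
  set m := Nat.sqrt n
  have hK : 0 ≤ K := by simpa using (abs_nonneg _).trans (h 1)
  have hlo : ((m ^ 2 : ℕ) : ℝ) ≤ n := by exact_mod_cast Nat.sqrt_le' n
  have hhi : (n : ℝ) + 1 ≤ ((m + 1) ^ 2 : ℕ) := by exact_mod_cast Nat.lt_succ_sqrt' n
  have hflo : (f (m ^ 2) : ℝ) ≤ f n := by exact_mod_cast hf (Nat.sqrt_le' n)
  have hfhi : (f n : ℝ) ≤ f ((m + 1) ^ 2) := by exact_mod_cast hf (Nat.lt_succ_sqrt' n).le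
  push_cast at hlo hhi
  have hm := abs_le.1 (h m)
  have hm1 := abs_le.1 (h (m + 1))
  push_cast at hm1
  have e1 : ((m + 1) ^ 2 - n) * L ≤ (2 * m + 1) * L :=
    mul_le_mul_of_nonneg_right (by linarith) hL
  have e2 : (n - m ^ 2) * L ≤ (2 * m) * L := mul_le_mul_of_nonneg_right (by linarith) hL
  rw [abs_le]
  constructor <;> nlinarith

lemma tendsto_div_of_abs_sub_mul_le {a : ℕ → ℝ} {L K : ℝ}
    (h : ∀ n, |a n - n * L| ≤ K * (Nat.sqrt n + 1)) :
    Tendsto (fun n => a n / n) atTop (𝓝 L) := by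
  have hK : 0 ≤ K := by simpa using (abs_nonneg _).trans (h 0)
  have hsqrt : Tendsto Nat.sqrt atTop atTop :=
    tendsto_atTop_atTop.2 fun m => ⟨m ^ 2, fun n hn => Nat.le_sqrt'.2 hn⟩
  refine tendsto_sub_nhds_zero_iff.1 (squeeze_zero_norm' ?_
    ((tendsto_const_div_atTop_nhds_zero_nat (2 * K)).comp hsqrt))
  filter_upwards [eventually_ge_atTop 1] with n hn
  have hm : (1 : ℝ) ≤ Nat.sqrt n := by exact_mod_cast Nat.le_sqrt'.2 (by simpa using hn)
  have hmn : (Nat.sqrt n : ℝ) ^ 2 ≤ n := by exact_mod_cast Nat.sqrt_le' n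
  have hn : (0 : ℝ) < n := by exact_mod_cast hn
  calc ‖a n / n - L‖ = |a n - n * L| / n := by
        rw [Real.norm_eq_abs, div_sub' hn.ne', abs_div, abs_of_pos hn, mul_comm]
    _ ≤ K * (Nat.sqrt n + 1) / n := by gcongr; exact h n
    _ ≤ K * (2 * Nat.sqrt n) / (Nat.sqrt n) ^ 2 := by gcongr; linarith
    _ = 2 * K / Nat.sqrt n := by field_simp

/-- if `C ⊆ (0,1)` is everywhere dense in `(0,1)`, then there is a
`C`-uniformly distributed sequence of points of `[0,1]`. -/
theorem stmt2 (C : Set ℝ) (hC : C ⊆ Set.Ioo 0 1)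
    (hdense : Set.Ioo (0 : ℝ) 1 ⊆ closure C) :
    ∃ y : ℕ → ℝ, (∀ n, y n ∈ Set.Icc (0 : ℝ) 1) ∧ IsUDSeq C y := by
  choose y hyC hycell using fun n => exists_mem_gridCell hdense (sub_sqrt_sq_lt n)
  refine ⟨y, fun n => Set.Ioo_subset_Icc_self (hC (hyC n)), fun c d hc hcd hd => ?_⟩
  have hblock (m j : ℕ) (hj : j < 2 * m + 1) : y (m ^ 2 + j) ∈ gridCell (2 * m + 1) j := by
    have := hycell (m ^ 2 + j)
    rwa [Nat.sqrt_add_eq' m (by omega), Nat.add_sub_cancel_left] at this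
  have hcount (n : ℕ) :
      {k | k < n ∧ y k ∈ Set.Icc c d ∩ C}.ncard = #{k ∈ range n | y k ∈ Set.Icc c d} := by
    rw [← Set.ncard_coe_finset]
    congr 1
    ext k
    simp [hyC k]
  simp only [hcount]
  have hmono : Monotone fun n => #{k ∈ range n | y k ∈ Set.Icc c d} :=
    fun a b hab => card_le_card (filter_subset_filter _ (range_mono hab))
  exact tendsto_div_of_abs_sub_mul_le (abs_sub_mul_le_of_abs_sq_sub_le hmono
    (sub_nonneg.2 hcd.le) (abs_card_filter_range_sq_sub_le hblock hc hcd.le hd))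
end

section
/- Let (C_t)_{t∈[0,1]} be a partition of [0,1] (pairwise disjoint sets with union [0,1]) such that each C_t is everywhere dense in (0,1). Then there exists a sequence (y_n)_{n≥1} of points of [0,1] which is λ-uniformly distributed but which is not C_t-uniformly distributed for any t ∈ [0,1]. -/
open Filter Topology

/-!
Write `k = s² + j` with `s = ⌊√k⌋` and `j ≤ 2s`, and choose `y k` in the cell
`(j/(2s+1), (j+1)/(2s+1))`, from `C t₀` for even `k` and from `C t₁` for odd `k` (possible by
density). The `s`-th block meets `[c,d]` in `(d-c)(2s+1) ± 2` points, so the counting error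
up to `n` is `O(√n)` and `y` is `λ`-uniformly distributed. But no `C t` contains both `y (2k)`
and `y (2k+1)`, so its frequency in `[0,1]` is at most `1/2` at every even `n`.
-/

open Set

lemma ncard_setOf_lt_and_eq_count (P : ℕ → Prop) [DecidablePred P] (n : ℕ) :
    {k | k < n ∧ P k}.ncard = Nat.count P n := by
  rw [Nat.count_eq_card_filter_range, ← ncard_coe_finset]
  congr 1
  ext k
  simp

lemma tendsto_div_of_abs_sub_le_mul_sqrt {f : ℕ → ℝ} {a K : ℝ}
    (h : ∀ n : ℕ, |f n - a * n| ≤ K * √n) : Tendsto (fun n : ℕ => f n / n) atTop (𝓝 a) := by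
  have hK : Tendsto (fun n : ℕ => K / √n) atTop (𝓝 0) :=
    tendsto_const_nhds.div_atTop (Real.tendsto_sqrt_atTop.comp tendsto_natCast_atTop_atTop)
  have hsub : Tendsto (fun n : ℕ => f n / n - a) atTop (𝓝 0) := by
    refine squeeze_zero_norm' ?_ hK
    filter_upwards [eventually_gt_atTop 0] with n hn
    have hn' : (0 : ℝ) < n := by exact_mod_cast hn
    have hsqrt : √(n : ℝ) * √n = n := Real.mul_self_sqrt hn'.le
    rw [Real.norm_eq_abs, show f n / n - a = (f n - a * n) / n by field_simp, abs_div,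
      abs_of_pos hn', div_le_div_iff₀ hn' (Real.sqrt_pos.2 hn')]
    calc |f n - a * n| * √n ≤ K * √n * √n := by gcongr; exact h n
      _ = K * n := by rw [mul_assoc, hsqrt]
  simpa using hsub.add_const a

def cell (N j : ℕ) : Set ℝ := Ioo (j / N) ((j + 1) / N)

lemma mem_cell_iff {N j : ℕ} (hN : 0 < N) {x : ℝ} :
    x ∈ cell N j ↔ (j : ℝ) < x * N ∧ x * N < j + 1 := by
  have hN' : (0 : ℝ) < N := by exact_mod_cast hN
  simp [cell, div_lt_iff₀ hN', lt_div_iff₀ hN']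

lemma cell_subset_Ioo {N j : ℕ} (hj : j < N) : cell N j ⊆ Ioo 0 1 := by
  have hN : (0 : ℝ) < N := by exact_mod_cast j.zero_le.trans_lt hj
  have hjN : (j : ℝ) + 1 ≤ N := by exact_mod_cast hj
  rintro x ⟨h₁, h₂⟩
  exact ⟨(div_nonneg j.cast_nonneg hN.le).trans_lt h₁, h₂.trans_le ((div_le_one hN).2 hjN)⟩

lemma nonempty_inter_cell {A : Set ℝ} (hA : Ioo 0 1 ⊆ closure A) {N j : ℕ} (hj : j < N) :
    (A ∩ cell N j).Nonempty := by
  have hN : (0 : ℝ) < N := by exact_mod_cast j.zero_le.trans_lt hj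
  obtain ⟨x, hx⟩ : (cell N j).Nonempty :=
    nonempty_Ioo.2 (div_lt_div_of_pos_right (lt_add_one _) hN)
  exact (closure_inter_open_nonempty_iff isOpen_Ioo).1 ⟨x, hA (cell_subset_Ioo hj hx), hx⟩

lemma abs_count_mem_Icc_sub_le {N : ℕ} {q : ℕ → ℝ} (hq : ∀ j < N, q j ∈ cell N j) {c d : ℝ}
    (hc : 0 ≤ c) (hcd : c ≤ d) (hd : d ≤ 1) :
    |(Nat.count (fun j => q j ∈ Icc c d) N : ℝ) - (d - c) * N| ≤ 2 := by
  rcases N.eq_zero_or_pos with rfl | hN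
  · simp
  have hN' : (0 : ℝ) < N := by exact_mod_cast hN
  have hcN : 0 ≤ c * N := by positivity
  have hdN : 0 ≤ d * N := mul_nonneg (hc.trans hcd) hN'.le
  -- Cells with index in `[⌈cN⌉, ⌊dN⌋)` lie inside `[c,d]`; only those in `[⌊cN⌋, ⌈dN⌉)` meet it.
  have hinner : Finset.Ico ⌈c * N⌉₊ ⌊d * N⌋₊ ⊆ {j ∈ Finset.range N | q j ∈ Icc c d} := by
    intro j hj
    rw [Finset.mem_Ico, Nat.ceil_le, Nat.lt_iff_add_one_le, Nat.le_floor_iff hdN] at hj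
    push_cast at hj
    have hjN : j < N := by exact_mod_cast (show (j : ℝ) < N by nlinarith)
    obtain ⟨h₁, h₂⟩ := (mem_cell_iff hN).1 (hq j hjN)
    simp only [Finset.mem_filter, Finset.mem_range, mem_Icc]
    exact ⟨hjN, le_of_mul_le_mul_right (by linarith) hN', le_of_mul_le_mul_right (by linarith) hN'⟩
  have houter : {j ∈ Finset.range N | q j ∈ Icc c d} ⊆ Finset.Ico ⌊c * N⌋₊ ⌈d * N⌉₊ := by
    intro j hj
    simp only [Finset.mem_filter, Finset.mem_range, mem_Icc] at hj
    obtain ⟨hjN, hcq, hqd⟩ := hj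
    obtain ⟨h₁, h₂⟩ := (mem_cell_iff hN).1 (hq j hjN)
    rw [Finset.mem_Ico, ← Nat.lt_add_one_iff, Nat.floor_lt hcN, Nat.lt_ceil]
    push_cast
    constructor <;> nlinarith
  have hlo := Finset.card_le_card hinner
  have hhi := Finset.card_le_card houter
  rw [Nat.card_Ico, ← Nat.count_eq_card_filter_range] at hlo hhi
  have hfc : ⌊c * N⌋₊ ≤ ⌈d * N⌉₊ :=
    (Nat.floor_le_floor (by nlinarith)).trans (Nat.floor_le_ceil _)
  have hlo' : (⌊d * N⌋₊ : ℝ) ≤ Nat.count (fun j => q j ∈ Icc c d) N + ⌈c * N⌉₊ := by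
    exact_mod_cast (show _ ≤ _ from by omega)
  have hhi' : (Nat.count (fun j => q j ∈ Icc c d) N : ℝ) + ⌊c * N⌋₊ ≤ ⌈d * N⌉₊ := by
    exact_mod_cast (show _ ≤ _ from by omega)
  rw [abs_le]
  constructor <;> linarith [Nat.lt_floor_add_one (c * N), Nat.ceil_lt_add_one hdN,
    Nat.sub_one_lt_floor (d * N), Nat.ceil_lt_add_one hcN]

lemma count_two_mul_le {P : ℕ → Prop} [DecidablePred P] (h : ∀ k, ¬ (P (2 * k) ∧ P (2 * k + 1)))
    (n : ℕ) : Nat.count P (2 * n) ≤ n := by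
  induction n with
  | zero => simp
  | succ n ih =>
    rw [show 2 * (n + 1) = 2 * n + 1 + 1 by ring, Nat.count_succ, Nat.count_succ]
    split_ifs with h₀ h₁ h₁
    · exact absurd ⟨h₀, h₁⟩ (h n)
    all_goals omega

lemma not_isUDSeq_of_not_mem_consecutive {C : Set ℝ} {x : ℕ → ℝ}
    (h : ∀ k, ¬ (x (2 * k) ∈ C ∧ x (2 * k + 1) ∈ C)) : ¬ IsUDSeq C x := by
  classical
  intro hx
  have hlim := (hx 0 1 le_rfl one_pos le_rfl).comp
    (strictMono_mul_left_of_pos two_pos).tendsto_atTop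
  have hhalf : ∀ᶠ n : ℕ in atTop,
      (({k | k < 2 * n ∧ x k ∈ Icc 0 1 ∩ C}.ncard : ℕ) : ℝ) / ((2 * n : ℕ) : ℝ) ≤ 1 / 2 := by
    filter_upwards [eventually_gt_atTop 0] with n hn
    have hn' : (0 : ℝ) < n := by exact_mod_cast hn
    have hcount := count_two_mul_le (P := fun k => x k ∈ Icc 0 1 ∩ C)
      (fun k hk => h k ⟨hk.1.2, hk.2.2⟩) n
    rw [ncard_setOf_lt_and_eq_count, div_le_iff₀ (by positivity)]
    push_cast
    linarith [(Nat.cast_le (α := ℝ)).2 hcount]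
  have := le_of_tendsto hlim hhalf
  norm_num at this

section SqrtBlocks

variable {y : ℕ → ℝ} {c d : ℝ}

lemma abs_count_mul_self_sub_le
    (hy : ∀ k, y k ∈ cell (2 * k.sqrt + 1) (k - k.sqrt * k.sqrt))
    (hc : 0 ≤ c) (hcd : c ≤ d) (hd : d ≤ 1) (s : ℕ) :
    |(Nat.count (fun k => y k ∈ Icc c d) (s * s) : ℝ) - (d - c) * (s * s : ℕ)| ≤ 2 * s := by
  induction s with
  | zero => simp
  | succ s ih =>
    have hblock : ∀ j < 2 * s + 1, y (s * s + j) ∈ cell (2 * s + 1) j := by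
      intro j hj
      simpa [Nat.sqrt_add_eq s (show j ≤ s + s by omega)] using hy (s * s + j)
    have := abs_count_mem_Icc_sub_le hblock hc hcd hd
    rw [show (s + 1) * (s + 1) = s * s + (2 * s + 1) by ring, Nat.count_add]
    push_cast at ih this ⊢
    rw [abs_le] at ih this ⊢
    constructor <;> linarith

lemma abs_count_sub_le_mul_sqrt
    (hy : ∀ k, y k ∈ cell (2 * k.sqrt + 1) (k - k.sqrt * k.sqrt))
    (hc : 0 ≤ c) (hcd : c ≤ d) (hd : d ≤ 1) (n : ℕ) :
    |(Nat.count (fun k => y k ∈ Icc c d) n : ℝ) - (d - c) * n| ≤ 4 * √n := by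
  set s := n.sqrt
  obtain ⟨r, hr⟩ := Nat.exists_eq_add_of_le (Nat.sqrt_le n)
  have hr2 : r ≤ 2 * s := by have := Nat.sqrt_le_add n; omega
  have hsplit : Nat.count (fun k => y k ∈ Icc c d) n = Nat.count (fun k => y k ∈ Icc c d) (s * s)
      + Nat.count (fun k => y (s * s + k) ∈ Icc c d) r := by
    rw [← Nat.count_add, ← hr]
  have hblocks := abs_count_mul_self_sub_le hy hc hcd hd s
  have htail : (Nat.count (fun k => y (s * s + k) ∈ Icc c d) r : ℝ) ≤ r := by
    exact_mod_cast Nat.count_le _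
  have hrest : 0 ≤ (d - c) * r ∧ (d - c) * r ≤ r :=
    ⟨by have := sub_nonneg.2 hcd; positivity,
      mul_le_of_le_one_left r.cast_nonneg (by linarith)⟩
  have hs : (s : ℝ) ≤ √n := Real.nat_sqrt_le_real_sqrt
  have hr2' : (r : ℝ) ≤ 2 * s := by exact_mod_cast hr2
  have hn : (d - c) * n = (d - c) * (s * s : ℕ) + (d - c) * r := by
    rw [← mul_add, ← Nat.cast_add, ← hr]
  rw [hsplit, hn, Nat.cast_add]
  rw [abs_le] at hblocks ⊢
  have := (Nat.count (fun k => y (s * s + k) ∈ Icc c d) r).cast_nonneg (α := ℝ)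
  constructor <;> linarith

theorem isLambdaUDSeq_of_mem_cell
    (hy : ∀ k, y k ∈ cell (2 * k.sqrt + 1) (k - k.sqrt * k.sqrt)) : IsLambdaUDSeq y := by
  intro c d hc hcd hd
  simp only [ncard_setOf_lt_and_eq_count]
  exact tendsto_div_of_abs_sub_le_mul_sqrt (abs_count_sub_le_mul_sqrt hy hc hcd.le hd)

end SqrtBlocks

theorem stmt4_general (C : ↥(Set.Icc (0 : ℝ) 1) → Set ℝ)
    (hdisj : ∀ t t', t ≠ t' → C t ∩ C t' = ∅)
    (hdense : ∀ t, Set.Ioo (0 : ℝ) 1 ⊆ closure (C t)) :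
    ∃ y : ℕ → ℝ, (∀ n, y n ∈ Set.Icc (0 : ℝ) 1) ∧ IsLambdaUDSeq y ∧
      ∀ t, ¬ IsUDSeq (C t) y := by
  let t₀ : Icc (0 : ℝ) 1 := ⟨0, by norm_num⟩
  let t₁ : Icc (0 : ℝ) 1 := ⟨1, by norm_num⟩
  have ht : t₀ ≠ t₁ := fun h => zero_ne_one (congrArg Subtype.val h)
  have hsame : ∀ {t t' x}, x ∈ C t → x ∈ C t' → t = t' := fun hx hx' =>
    by_contra fun hne => (hdisj _ _ hne).subset ⟨hx, hx'⟩
  have hj : ∀ k, k - k.sqrt * k.sqrt < 2 * k.sqrt + 1 := fun k => by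
    have := Nat.sqrt_le_add k; omega
  choose y hyC hycell using fun k => nonempty_inter_cell (hdense (if Even k then t₀ else t₁)) (hj k)
  refine ⟨y, fun k => Ioo_subset_Icc_self (cell_subset_Ioo (hj k) (hycell k)),
    isLambdaUDSeq_of_mem_cell hycell, fun t => not_isUDSeq_of_not_mem_consecutive fun k hk => ht ?_⟩
  have hy₀ : y (2 * k) ∈ C t₀ := by simpa using hyC (2 * k)
  have hy₁ : y (2 * k + 1) ∈ C t₁ := by simpa [Nat.even_add_one] using hyC (2 * k + 1)
  exact (hsame hy₀ hk.1).trans (hsame hk.2 hy₁)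

/-- if `(C_t)_{t ∈ [0,1]}` is a partition of `[0,1]` into sets each
everywhere dense in `(0,1)`, then there is a `λ`-uniformly distributed sequence of
points of `[0,1]` which is not `C_t`-uniformly distributed for any `t`. -/
theorem stmt4 (C : ↥(Set.Icc (0 : ℝ) 1) → Set ℝ)
    (hdisj : ∀ t t', t ≠ t' → C t ∩ C t' = ∅)
    (hunion : (⋃ t, C t) = Set.Icc (0 : ℝ) 1)
    (hdense : ∀ t, Set.Ioo (0 : ℝ) 1 ⊆ closure (C t)) :
    ∃ y : ℕ → ℝ, (∀ n, y n ∈ Set.Icc (0 : ℝ) 1) ∧ IsLambdaUDSeq y ∧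
      ∀ t, ¬ IsUDSeq (C t) y :=
  stmt4_general C hdisj hdense
end

section
/- Let (C_t)_{t∈[0,1]} be a partition of [0,1] (pairwise disjoint sets whose union is [0,1]). Then for every λ-uniformly distributed sequence (y_n)_{n≥1} of points of [0,1] there exists a countable set T ⊆ [0,1] such that (y_n)_{n≥1} is not C_t-uniformly distributed for any t ∈ [0,1] \ T. -/
open Filter Topology

/-!
The points of the sequence are countably many and, the sets `C t` being pairwise disjoint, each
of them lies in at most one `C t`. So only countably many `C t` contain a term of the sequence;
for every other `t` the counting function of `C t` vanishes identically, whereas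
`C t`-uniform distribution would force its frequencies on `[0,1]` to tend to `1`.
-/

open Function

lemma not_isUDSeq_of_forall_notMem {C : Set ℝ} {x : ℕ → ℝ} (h : ∀ k, x k ∉ C) :
    ¬ IsUDSeq C x := by
  intro hC
  have hcount_empty (n : ℕ) : {k : ℕ | k < n ∧ x k ∈ Set.Icc (0 : ℝ) 1 ∩ C} = ∅ :=
    Set.eq_empty_of_forall_notMem fun k hk => h k hk.2.2
  have hzero := hC 0 1 le_rfl one_pos le_rfl
  simp only [hcount_empty, Set.ncard_empty, Nat.cast_zero, zero_div, sub_zero] at hzero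
  exact one_ne_zero (tendsto_nhds_unique hzero tendsto_const_nhds)

lemma Set.countable_setOf_exists_mem_of_pairwise_disjoint {ι κ α : Type*} [Countable κ]
    {C : ι → Set α} (hC : Pairwise (Disjoint on C)) (x : κ → α) : {i | ∃ k, x k ∈ C i}.Countable := by
  have hsub (k : κ) : {i | x k ∈ C i}.Subsingleton := fun i hi j hj => by
    by_contra hij
    exact Set.disjoint_left.mp (hC hij) hi hj
  simpa only [Set.ofPred_exists] using Set.countable_iUnion fun k => (hsub k).countable

theorem stmt7_general (C : ↥(Set.Icc (0 : ℝ) 1) → Set ℝ)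
    (hdisj : ∀ t t', t ≠ t' → C t ∩ C t' = ∅)
    (y : ℕ → ℝ) :
    ∃ T : Set ↥(Set.Icc (0 : ℝ) 1), T.Countable ∧
      ∀ t, t ∉ T → ¬ IsUDSeq (C t) y := by
  have hC : Pairwise (Disjoint on C) := fun t t' h =>
    Set.disjoint_iff_inter_eq_empty.mpr (hdisj t t' h)
  refine ⟨{t | ∃ k, y k ∈ C t}, Set.countable_setOf_exists_mem_of_pairwise_disjoint hC y, ?_⟩
  intro t ht
  exact not_isUDSeq_of_forall_notMem fun k hk => ht ⟨k, hk⟩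

/-- if `(C_t)_{t ∈ [0,1]}` is a partition of `[0,1]`, then for every
`λ`-uniformly distributed sequence of points of `[0,1]` there is a countable set
`T ⊆ [0,1]` such that the sequence is not `C_t`-uniformly distributed for any
`t ∉ T`. -/
theorem stmt7 (C : ↥(Set.Icc (0 : ℝ) 1) → Set ℝ)
    (hdisj : ∀ t t', t ≠ t' → C t ∩ C t' = ∅)
    (hunion : (⋃ t, C t) = Set.Icc (0 : ℝ) 1)
    (y : ℕ → ℝ) (hy : ∀ n, y n ∈ Set.Icc (0 : ℝ) 1) (hud : IsLambdaUDSeq y) :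
    ∃ T : Set ↥(Set.Icc (0 : ℝ) 1), T.Countable ∧
      ∀ t, t ∉ T → ¬ IsUDSeq (C t) y :=
  stmt7_general C hdisj y
end

section
/- Let S be a σ-algebra of subsets of [0,1], let μ be a probability measure on ([0,1], S), and let f : [0,1] → ℝ be μ-integrable. Then the infinite product measure μ^∞ of the set of all sequences (x_k)_{k≥1} ∈ [0,1]^ℕ for which lim_{n→∞} (1/n) ∑_{k=1}^n f(x_k) = ∫_{[0,1]} f(x) dμ(x) is equal to 1. -/
/-! Under the product measure the coordinates `x ↦ f (x k)` are pairwise independent and identically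
distributed with the law of `f` under `μ`, so the strong law of large numbers applies. The
cylinder-set condition on `P` pins it down as the product measure `Measure.infinitePi`. -/

open Filter Topology MeasureTheory ProbabilityTheory

variable {α : Type*} [MeasurableSpace α] {μ : Measure α} [IsProbabilityMeasure μ]

theorem ae_tendsto_average_infinitePi {f : α → ℝ} (hf : Integrable f μ) :
    ∀ᵐ x ∂Measure.infinitePi (fun _ : ℕ => μ),
      Tendsto (fun n : ℕ => (∑ k ∈ Finset.range n, f (x k)) / n) atTop
        (𝓝 (∫ t, f t ∂μ)) := by
  set P := Measure.infinitePi (fun _ : ℕ => μ)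
  have heval (i : ℕ) : MeasurePreserving (fun x : ℕ → α => x i) P μ :=
    measurePreserving_eval_infinitePi _ i
  have hf_map (i : ℕ) : AEMeasurable f (P.map fun x => x i) :=
    (heval i).map_eq ▸ hf.aemeasurable
  have hindep : Pairwise fun i j => (fun x : ℕ → α => f (x i)) ⟂ᵢ[P] fun x => f (x j) :=
    fun i j hij => ((iIndepFun_infinitePi (X := fun _ ω => ω) fun _ => measurable_id).indepFun
      hij).comp₀ (heval i).aemeasurable (heval j).aemeasurable (hf_map i) (hf_map j)
  have hident (i : ℕ) : IdentDistrib (fun x : ℕ → α => f (x i)) (fun x => f (x 0)) P P :=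
    IdentDistrib.comp_of_aemeasurable
      ⟨(heval i).aemeasurable, (heval 0).aemeasurable, by rw [(heval i).map_eq, (heval 0).map_eq]⟩
      (hf_map i)
  have hmean : ∫ x, f (x 0) ∂P = ∫ t, f t ∂μ := by
    rw [← integral_map (heval 0).aemeasurable ((heval 0).map_eq ▸ hf.aestronglyMeasurable),
      (heval 0).map_eq]
  simpa only [hmean] using
    strong_law_ae_real _ ((heval 0).integrable_comp_of_integrable hf) hindep hident

/-- if `S` is a σ-algebra on `[0,1]`, `μ` a probability measure on
`([0,1], S)` and `f : [0,1] → ℝ` is `μ`-integrable, then the infinite product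
measure `μ^∞` (characterized by its values on cylinder sets; here `P` is any such
product measure on `[0,1]^ℕ` with the product σ-algebra, applied to an arbitrary
set via its outer measure) of the set of all sequences `(x_k)` for which
`(1/n) ∑_{k<n} f(x_k) → ∫ f dμ` equals 1. -/
theorem stmt8 (S : MeasurableSpace ↥(Set.Icc (0 : ℝ) 1))
    (μ : @Measure ↥(Set.Icc (0 : ℝ) 1) S)
    (hprob : μ Set.univ = 1)
    (f : ↥(Set.Icc (0 : ℝ) 1) → ℝ)
    (hf : Integrable f μ)
    (P : @Measure (ℕ → ↥(Set.Icc (0 : ℝ) 1))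
      (@MeasurableSpace.pi ℕ (fun _ => ↥(Set.Icc (0 : ℝ) 1)) (fun _ => S)))
    (hP : ∀ (s : Finset ℕ) (A : ℕ → Set ↥(Set.Icc (0 : ℝ) 1)),
      (∀ i ∈ s, MeasurableSet[S] (A i)) →
        P {x | ∀ i ∈ s, x i ∈ A i} = ∏ i ∈ s, μ (A i)) :
    P {x : ℕ → ↥(Set.Icc (0 : ℝ) 1) |
        Tendsto (fun n : ℕ => (∑ k ∈ Finset.range n, f (x k)) / n) atTop
          (𝓝 (∫ t, f t ∂μ))} = 1 := by
  let : MeasurableSpace ↥(Set.Icc (0 : ℝ) 1) := S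
  have : IsProbabilityMeasure μ := ⟨hprob⟩
  obtain rfl : P = Measure.infinitePi (fun _ => μ) :=
    Measure.eq_infinitePi _ fun s A hA => hP s A fun i _ => hA i
  rw [measure_congr (eventuallyEq_univ.2 (ae_tendsto_average_infinitePi hf)), measure_univ]
end

section
/- Let K be a translation-invariant σ-ideal of subsets of the real line ℝ (i.e., K is closed under subsets and countable unions, and Z ∈ K, g ∈ ℝ imply g + Z ∈ K) such that every Z ∈ K has inner Lebesgue measure zero, i.e., λ_*(Z) = 0, where λ_* is the inner measure induced by the linear Lebesgue measure λ. Then there exists a measure μ defined on the σ-algebra generated by the Lebesgue measurable sets together with K such that: μ is translation-invariant; μ agrees with λ on all Lebesgue measurable sets; μ(Z) = 0 for every Z ∈ K; and every set of this σ-algebra can be written in the form (X ∪ Z') \ Z'' with X Lebesgue measurable and Z', Z'' ∈ K, with μ((X ∪ Z') \ Z'') = λ(X). -/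
open MeasureTheory

/-- The σ-algebra generated by the Lebesgue measurable sets together with the
members of a class `K` of subsets of `ℝ`. -/
def extSigmaAlgebra (K : Set (Set ℝ)) : MeasurableSpace ℝ :=
  MeasurableSpace.generateFrom ({A : Set ℝ | NullMeasurableSet A volume} ∪ K)

/-!
Let `l` be the filter of sets whose complement lies in `K`; it has the countable intersection
property and `Z ∈ K ↔ Z =ᶠ[l] ∅`. The σ-algebra generated by the Lebesgue measurable sets and `K`
consists exactly of the sets `A` that agree `l`-eventually with a Lebesgue measurable `X`, and we
put `μ A = λ X`. This is well defined because, by the inner-measure hypothesis, two measurable sets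
agreeing modulo `K` differ by a null set; for the same reason representatives of disjoint sets are
almost disjoint, which gives countable additivity. Translation invariance of `μ` comes from that
of `λ` and of `K`.
-/

open Filter Function Set

theorem Set.eq_union_sdiff_sdiff {α : Type*} (A X : Set α) : A = (X ∪ A \ X) \ (X \ A) := by
  ext x
  simp only [mem_sdiff, mem_union]
  tauto

theorem Set.sUnion_mem_of_forall_iUnion_mem {α : Type*} {K : Set (Set α)} (hempty : ∅ ∈ K)
    (hunion : ∀ f : ℕ → Set α, (∀ k, f k ∈ K) → ⋃ k, f k ∈ K) {S : Set (Set α)}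
    (hS : S.Countable) (hSK : ∀ s ∈ S, s ∈ K) : ⋃₀ S ∈ K := by
  rcases S.eq_empty_or_nonempty with rfl | hne
  · rwa [sUnion_empty]
  · obtain ⟨f, rfl⟩ := hS.exists_eq_range hne
    rw [sUnion_range]
    exact hunion f fun k => hSK _ (mem_range_self k)

theorem Filter.EventuallyEq.sdiff_eventuallyEq_empty {α : Type*} {l : Filter α} {A X : Set α}
    (h : A =ᶠ[l] X) : A \ X =ᶠ[l] (∅ : Set α) := by
  have h' := h.diff (EventuallyEq.refl l X)
  rwa [sdiff_self] at h'

namespace MeasureTheory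

variable {α β : Type*} [MeasurableSpace α] [MeasurableSpace β] {μ : Measure α} {ν : Measure β}
  {l : Filter α} {l' : Filter β}

theorem measure_congr_of_eventuallyEq
    (hμl : ∀ X, NullMeasurableSet X μ → X =ᶠ[l] (∅ : Set α) → μ X = 0) {X Y : Set α}
    (hX : NullMeasurableSet X μ) (hY : NullMeasurableSet Y μ) (h : X =ᶠ[l] Y) : μ X = μ Y :=
  measure_congr <| ae_eq_set.2
    ⟨hμl _ (hX.diff hY) h.sdiff_eventuallyEq_empty,
      hμl _ (hY.diff hX) h.symm.sdiff_eventuallyEq_empty⟩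

theorem measure_iUnion_of_eventuallyEq_pairwise_disjoint
    (hμl : ∀ X, NullMeasurableSet X μ → X =ᶠ[l] (∅ : Set α) → μ X = 0) {f X : ℕ → Set α}
    (hX : ∀ i, NullMeasurableSet (X i) μ) (hfX : ∀ i, f i =ᶠ[l] X i)
    (hf : Pairwise (Disjoint on f)) : μ (⋃ i, X i) = ∑' i, μ (X i) := by
  refine measure_iUnion₀ (fun i j hij => hμl _ ((hX i).inter (hX j)) ?_) hX
  have h := ((hfX i).inter (hfX j)).symm
  rwa [(hf hij).inter_eq] at h

variable (μ l) in
def measurableSpaceModFilter [CountableInterFilter l] : MeasurableSpace α where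
  MeasurableSet' A := ∃ X, NullMeasurableSet X μ ∧ A =ᶠ[l] X
  measurableSet_empty := ⟨∅, .empty, .rfl⟩
  measurableSet_compl := fun _ ⟨X, hX, hAX⟩ => ⟨Xᶜ, hX.compl, hAX.compl⟩
  measurableSet_iUnion f hf := by
    choose X hX hfX using hf
    exact ⟨⋃ i, X i, .iUnion hX, .countable_iUnion hfX⟩

variable [CountableInterFilter l] [CountableInterFilter l']

variable (μ l) in
theorem measurableSpaceModFilter_eq_generateFrom :
    measurableSpaceModFilter μ l =
      MeasurableSpace.generateFrom ({A | NullMeasurableSet A μ} ∪ {Z | Z =ᶠ[l] (∅ : Set α)}) := by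
  refine le_antisymm ?_ (MeasurableSpace.generateFrom_le ?_)
  · rintro A ⟨X, hX, hAX⟩
    have hgen : ∀ {B}, B ∈ {A | NullMeasurableSet A μ} ∪ {Z | Z =ᶠ[l] (∅ : Set α)} →
        MeasurableSet[MeasurableSpace.generateFrom _] B :=
      fun hB => MeasurableSpace.measurableSet_generateFrom hB
    rw [eq_union_sdiff_sdiff A X]
    exact ((hgen (.inl hX)).union (hgen (.inr hAX.sdiff_eventuallyEq_empty))).diff
      (hgen (.inr hAX.symm.sdiff_eventuallyEq_empty))
  · rintro A (hA | hA)
    · exact ⟨A, hA, .rfl⟩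
    · exact ⟨∅, .empty, hA⟩

theorem measure_choose_eq_of_eventuallyEq
    (hμl : ∀ X, NullMeasurableSet X μ → X =ᶠ[l] (∅ : Set α) → μ X = 0) {A X : Set α}
    (hA : MeasurableSet[measurableSpaceModFilter μ l] A) (hX : NullMeasurableSet X μ)
    (hAX : A =ᶠ[l] X) : μ hA.choose = μ X :=
  measure_congr_of_eventuallyEq hμl hA.choose_spec.1 hX (hA.choose_spec.2.symm.trans hAX)

/-- A set gets the `μ`-measure of any null-measurable set `l`-eventually equal to it. -/
noncomputable def Measure.modFilter
    (hμl : ∀ X, NullMeasurableSet X μ → X =ᶠ[l] (∅ : Set α) → μ X = 0) :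
    @Measure α (measurableSpaceModFilter μ l) :=
  @Measure.ofMeasurable α (measurableSpaceModFilter μ l) (fun _ hA => μ hA.choose)
    ((measure_choose_eq_of_eventuallyEq hμl _ .empty .rfl).trans measure_empty)
    fun _ hf hd =>
      (measure_choose_eq_of_eventuallyEq hμl _ (.iUnion fun i => (hf i).choose_spec.1)
          (.countable_iUnion fun i => (hf i).choose_spec.2)).trans
        (measure_iUnion_of_eventuallyEq_pairwise_disjoint hμl (fun i => (hf i).choose_spec.1)
          (fun i => (hf i).choose_spec.2) hd)

theorem Measure.modFilter_apply
    (hμl : ∀ X, NullMeasurableSet X μ → X =ᶠ[l] (∅ : Set α) → μ X = 0) {A X : Set α}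
    (hX : NullMeasurableSet X μ) (hAX : A =ᶠ[l] X) : Measure.modFilter hμl A = μ X :=
  (@Measure.ofMeasurable_apply α (measurableSpaceModFilter μ l) _ _ _ A ⟨X, hX, hAX⟩).trans
    (measure_choose_eq_of_eventuallyEq hμl _ hX hAX)

theorem Measure.modFilter_preimage
    (hμl : ∀ X, NullMeasurableSet X μ → X =ᶠ[l] (∅ : Set α) → μ X = 0)
    (hνl' : ∀ Y, NullMeasurableSet Y ν → Y =ᶠ[l'] (∅ : Set β) → ν Y = 0) {f : α → β}
    (hf : MeasurePreserving f μ ν) (hfl : Tendsto f l l') {A : Set β}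
    (hA : MeasurableSet[measurableSpaceModFilter ν l'] A) :
    Measure.modFilter hμl (f ⁻¹' A) = Measure.modFilter hνl' A := by
  obtain ⟨Y, hY, hAY⟩ := hA
  have hpre : f ⁻¹' A =ᶠ[l] f ⁻¹' Y := hAY.comp_tendsto hfl
  rw [Measure.modFilter_apply hνl' hY hAY,
    Measure.modFilter_apply hμl (hY.preimage hf.quasiMeasurePreserving) hpre,
    hf.measure_preimage hY]

end MeasureTheory

/-- given a translation-invariant σ-ideal `K` of subsets of `ℝ` all of
whose members have inner Lebesgue measure zero, there is a translation-invariant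
measure on the σ-algebra generated by the Lebesgue measurable sets together with `K`
which extends Lebesgue measure, vanishes on `K`, and is given on each measurable set
`(X ∪ Z') \ Z''` (the general form of a measurable set) by `λ(X)`. -/
theorem stmt9 (K : Set (Set ℝ))
    (hempty : ∅ ∈ K)
    (hsub : ∀ Z ∈ K, ∀ W : Set ℝ, W ⊆ Z → W ∈ K)
    (hcountable_union : ∀ f : ℕ → Set ℝ, (∀ k, f k ∈ K) → (⋃ k, f k) ∈ K)
    (hinv : ∀ Z ∈ K, ∀ g : ℝ, (fun x => g + x) '' Z ∈ K)
    (hinner : ∀ Z ∈ K, ∀ X : Set ℝ, NullMeasurableSet X volume → X ⊆ Z →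
      volume X = 0) :
    ∃ μ : @Measure ℝ (extSigmaAlgebra K),
      (∀ (g : ℝ) (A : Set ℝ), MeasurableSet[extSigmaAlgebra K] A →
        μ ((fun x => g + x) '' A) = μ A) ∧
      (∀ X : Set ℝ, NullMeasurableSet X volume → μ X = volume X) ∧
      (∀ Z ∈ K, μ Z = 0) ∧
      (∀ A : Set ℝ, MeasurableSet[extSigmaAlgebra K] A →
        ∃ (X Z' Z'' : Set ℝ), NullMeasurableSet X volume ∧ Z' ∈ K ∧ Z'' ∈ K ∧
          A = (X ∪ Z') \ Z'' ∧ μ A = volume X) := by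
  let l := Filter.ofCountableUnion K
    (fun _ hS hSK => sUnion_mem_of_forall_iUnion_mem hempty hcountable_union hS hSK) hsub
  have hK : ∀ Z, Z ∈ K ↔ Z =ᶠ[l] (∅ : Set ℝ) := fun Z => by
    rw [eventuallyEq_empty, Filter.Eventually, ← compl_def, Filter.mem_ofCountableUnion,
      compl_compl]
  have hl : ∀ X, NullMeasurableSet X volume → X =ᶠ[l] (∅ : Set ℝ) → volume X = 0 :=
    fun X hX hXl => hinner X ((hK X).2 hXl) X hX subset_rfl
  have htrans : ∀ g : ℝ, Tendsto (fun x => g + x) l l := fun g s hs => by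
    rw [mem_map, Filter.mem_ofCountableUnion, ← preimage_compl]
    simpa [image_add_left] using hinv _ hs (-g)
  have hσ : extSigmaAlgebra K = measurableSpaceModFilter volume l := by
    rw [measurableSpaceModFilter_eq_generateFrom, extSigmaAlgebra]
    congr
    exact ext hK
  rw [hσ]
  refine ⟨Measure.modFilter hl, fun g A hA => ?_, fun X hX => Measure.modFilter_apply hl hX .rfl,
    fun Z hZ => ?_, fun A ⟨X, hX, hAX⟩ => ?_⟩
  · rw [image_add_left]
    exact Measure.modFilter_preimage hl hl (measurePreserving_add_left volume (-g)) (htrans _) hA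
  · exact (Measure.modFilter_apply hl .empty ((hK Z).1 hZ)).trans measure_empty
  · exact ⟨X, A \ X, X \ A, hX, (hK _).2 hAX.sdiff_eventuallyEq_empty,
      (hK _).2 hAX.symm.sdiff_eventuallyEq_empty, eq_union_sdiff_sdiff A X,
      Measure.modFilter_apply hl hX hAX⟩
end

section
/- There exists a family (X_i)_{i∈[0,1]} of subsets of the real line ℝ such that: (1) X_i ∩ X_{i'} = ∅ whenever i ≠ i'; (2) for every i ∈ [0,1] and every closed set F ⊆ ℝ with λ(F) > 0, the cardinality of X_i ∩ F equals the cardinality of the continuum 𝔠; (3) for every I' ⊆ [0,1] and every g ∈ ℝ, the cardinality of the symmetric difference (g + ⋃_{i∈I'} X_i) Δ (⋃_{i∈I'} X_i) is strictly less than 𝔠. -/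
/-!
Well-order a Hamel basis of `ℝ` over `ℚ` in order type `𝔠` and colour each basis vector by a
point of `[0, 1]`; colour a nonzero real by the colour of the largest basis vector in its
expansion. Adding `g` does not change the largest basis vector of `x` unless it is at most the
largest one of `g`, and such `x` lie in the `ℚ`-span of fewer than `𝔠` basis vectors. Hence every
union of colour classes is invariant under translation by `g` up to fewer than `𝔠` points. To make
each colour class meet each closed set of positive measure in `𝔠` points, the basis is built by a
transfinite recursion of length `𝔠` that runs through the `𝔠` many triples
(closed set, colour, real) and picks a point of the closed set outside the span of the earlier
choices; this is possible because such a closed set has `𝔠` points while the span has fewer.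
-/

open MeasureTheory Set Cardinal Submodule Ordinal

universe u v

theorem Cardinal.mk_span_le_max {K : Type u} {V : Type v} [Semiring K] [Countable K]
    [AddCommMonoid V] [Module K V] (s : Set V) : #(span K s) ≤ max #s ℵ₀ := by
  classical
  have hrange : (span K s : Set V) = range (Finsupp.linearCombination K ((↑) : s → V)) := by
    rw [← LinearMap.coe_range, Finsupp.range_linearCombination, Subtype.range_coe]
  have hprod : #(s × K) ≤ lift.{u} (max #s ℵ₀) := by
    rw [mk_prod, lift_max, lift_aleph0]
    exact (mul_le_max _ _).trans (max_le (max_le (le_max_left _ _)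
      ((lift_le_aleph0.2 mk_le_aleph0).trans (le_max_right _ _))) (le_max_right _ _))
  show #(span K s : Set V) ≤ _
  rw [hrange, ← lift_le.{u}]
  calc lift.{u} #(range (Finsupp.linearCombination K ((↑) : s → V)))
      ≤ #(s →₀ K) := by
        have := mk_range_le_lift (f := Finsupp.linearCombination K ((↑) : s → V))
        rwa [lift_umax.{v, u}, lift_id'.{v, u}] at this
    _ ≤ #(Finset (s × K)) := mk_le_of_injective (Finsupp.graph_injective _ _)
    _ ≤ #(List (s × K)) := mk_le_of_surjective List.toFinset_surjective
    _ ≤ max ℵ₀ #(s × K) := mk_list_le_max _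
    _ ≤ _ := max_le (by simp) hprod

theorem exists_mem_notMem_span_of_max_mk_lt {K V : Type*} [Semiring K] [Countable K]
    [AddCommMonoid V] [Module K V] {F s : Set V} (h : max #s ℵ₀ < #F) :
    ∃ x ∈ F, x ∉ span K s := by
  by_contra! hsub
  exact ((mk_le_mk_of_subset hsub).trans (mk_span_le_max s)).not_gt h

theorem IsClosed.continuum_le_mk_of_not_countable {X : Type u} [TopologicalSpace X]
    [PolishSpace X] {F : Set X} (hF : IsClosed F) (hunc : ¬F.Countable) : 𝔠 ≤ #F := by
  obtain ⟨f, hrange, -, hinj⟩ := hF.exists_nat_bool_injection_of_not_countable hunc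
  have : lift.{u} #(ℕ → Bool) ≤ lift.{0} #F :=
    lift_mk_le_lift_mk_of_injective (f := fun x => (⟨f x, hrange (mem_range_self x)⟩ : F))
      fun x y h => hinj (congrArg Subtype.val h)
  simpa using this

theorem IsClosed.continuum_le_mk_of_measure_pos {X : Type u} [TopologicalSpace X] [PolishSpace X]
    [MeasurableSpace X] {μ : Measure X} [NullSingletonClass μ] {F : Set X} (hF : IsClosed F)
    (hμ : 0 < μ F) : 𝔠 ≤ #F :=
  hF.continuum_le_mk_of_not_countable fun hc => hμ.ne' (hc.measure_zero μ)

open TopologicalSpace in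
theorem mk_setOf_isClosed_le_continuum (X : Type u) [TopologicalSpace X]
    [SecondCountableTopology X] : #{F : Set X // IsClosed F} ≤ 𝔠 := by
  have hinj : Function.Injective fun F : {F : Set X // IsClosed F} =>
      {U : countableBasis X | (U : Set X) ⊆ F.1ᶜ} := by
    intro F G h
    have hcompl : F.1ᶜ = G.1ᶜ := by
      rw [(isBasis_countableBasis X).open_eq_sUnion' F.2.isOpen_compl,
        (isBasis_countableBasis X).open_eq_sUnion' G.2.isOpen_compl]
      congr 1
      ext U
      exact and_congr_right fun hU => Set.ext_iff.1 h ⟨U, hU⟩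
    exact Subtype.ext (compl_injective hcompl)
  calc #{F : Set X // IsClosed F} ≤ #(Set (countableBasis X)) := mk_le_of_injective hinj
    _ = 2 ^ #(countableBasis X) := mk_set
    _ ≤ 2 ^ ℵ₀ := power_le_power_left two_ne_zero (countable_countableBasis X).le_aleph0
    _ = 𝔠 := two_power_aleph0

theorem mk_isClosed_volume_pos_real :
    #{F : Set ℝ // IsClosed F ∧ 0 < volume F} = 𝔠 := by
  refine le_antisymm
    ((mk_subtype_mono fun F hF => hF.1).trans (mk_setOf_isClosed_le_continuum ℝ)) ?_
  rw [← mk_real]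
  exact mk_le_of_injective (f := fun t => ⟨Ici t, isClosed_Ici, by simp⟩)
    fun s t h => Ici_injective (congrArg Subtype.val h)

theorem linearIndependent_of_forall_notMem_span_image_Iio {K V ι : Type*} [DivisionRing K]
    [AddCommGroup V] [Module K V] [LinearOrder ι] {v : ι → V}
    (hv : ∀ i, v i ∉ span K (v '' Iio i)) : LinearIndependent K v := by
  rw [linearIndependent_iff]
  intro l hl
  by_contra hne
  have hsupp : l.support.Nonempty := Finsupp.support_nonempty_iff.2 hne
  set i := l.support.max' hsupp
  have hli : l i ≠ 0 := Finsupp.mem_support_iff.1 (l.support.max'_mem hsupp)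
  -- solving `∑ l j • v j = 0` for its top term writes `v i` through the `v j` with `j < i`
  refine hv i ((Finsupp.mem_span_image_iff_linearCombination K).2
    ⟨Finsupp.single i 1 - (l i)⁻¹ • l, fun j hj => ?_, by simp [hl]⟩)
  have hj : (Finsupp.single i (1 : K) - (l i)⁻¹ • l) j ≠ 0 := Finsupp.mem_support_iff.1 hj
  rcases eq_or_ne j i with rfl | hji
  · simp [inv_mul_cancel₀ hli] at hj
  · have hlj : l j ≠ 0 := by simp_all
    exact lt_of_le_of_ne (l.support.le_max' j (Finsupp.mem_support_iff.2 hlj)) hji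

theorem exists_linearIndependent_forall_mem {K V ι : Type*} [DivisionRing K] [AddCommGroup V]
    [Module K V] [LinearOrder ι] [WellFoundedLT ι] (S : ι → Set V)
    (hS : ∀ i (f : Iio i → V), ∃ x ∈ S i, x ∉ span K (range f)) :
    ∃ v : ι → V, LinearIndependent K v ∧ ∀ i, v i ∈ S i := by
  choose pick hpick_mem hpick_notMem using hS
  let v : ι → V := WellFoundedLT.fix fun i ih => pick i fun j => ih j.1 j.2
  have hv (i : ι) : v i = pick i fun j => v j := WellFoundedLT.fix_eq _ i
  refine ⟨v, linearIndependent_of_forall_notMem_span_image_Iio fun i => ?_, fun i => ?_⟩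
  · rw [hv, image_eq_range]
    exact hpick_notMem i _
  · rw [hv]
    exact hpick_mem i _

theorem exists_basis_range_subset_of_linearIndependent {K : Type*} {V ι : Type u}
    [DivisionRing K] [AddCommGroup V] [Module K V] {v : ι → V} (hv : LinearIndependent K v)
    (hV : #V ≤ #ι) : ∃ b : Module.Basis ι K V, range v ⊆ range b := by
  have hext := hv.linearIndepOn_id.subset_extend (subset_univ _)
  obtain ⟨e⟩ := Cardinal.eq.1 <| le_antisymm ((mk_set_le _).trans hV)
    ((mk_range_eq v hv.injective).symm.le.trans (mk_le_mk_of_subset hext))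
  refine ⟨(Module.Basis.extend hv.linearIndepOn_id).reindex e, ?_⟩
  rintro _ ⟨i, rfl⟩
  exact ⟨e ⟨v i, hext (mem_range_self i)⟩, by simp⟩

namespace Module.Basis

variable {ι R M : Type*} [LinearOrder ι] [Semiring R] [AddCommMonoid M] [Module R M]
  (b : Basis ι R M)

noncomputable def leadingIndex (x : M) : WithBot ι := (b.repr x).support.max

theorem leadingIndex_add_of_lt {x y : M} (h : b.leadingIndex y < b.leadingIndex x) :
    b.leadingIndex (x + y) = b.leadingIndex x := by
  classical
  obtain ⟨i, hi⟩ := WithBot.ne_bot_iff_exists.1 h.ne_bot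
  have hix : i ∈ (b.repr x).support := Finset.mem_of_max hi.symm
  have hiy : i ∉ (b.repr y).support := fun hiy => (Finset.le_max hiy).not_gt (hi ▸ h)
  apply le_antisymm
  · calc b.leadingIndex (x + y) ≤ ((b.repr x).support ∪ (b.repr y).support).max :=
          Finset.max_mono (by rw [map_add]; exact Finsupp.support_add)
      _ = b.leadingIndex x := by rw [Finset.max_union]; exact max_eq_left h.le
  · rw [← hi]
    apply Finset.le_max
    rw [Finsupp.mem_support_iff, map_add, Finsupp.add_apply, Finsupp.notMem_support_iff.1 hiy,
      add_zero]
    exact Finsupp.mem_support_iff.1 hix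

theorem leadingIndex_self [Nontrivial R] (i : ι) : b.leadingIndex (b i) = i := by
  simp [leadingIndex]

theorem mem_span_image_of_leadingIndex_le {x : M} {t : WithBot ι} (h : b.leadingIndex x ≤ t) :
    x ∈ span R (b '' {i | (i : WithBot ι) ≤ t}) :=
  span_mono (image_mono fun _ hi => (Finset.le_max hi).trans h) (b.mem_span_repr_support x)

end Module.Basis

theorem Module.Basis.mk_setOf_leadingIndex_le_lt {K V ι : Type u} [Semiring K] [Countable K]
    [AddCommMonoid V] [Module K V] [LinearOrder ι] [WellFoundedLT ι] (b : Module.Basis ι K V)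
    (hord : (#ι).ord = typeLT ι) (hι : ℵ₀ < #ι) (t : WithBot ι) :
    #{x | b.leadingIndex x ≤ t} < #ι := by
  have hlower : #{i : ι | (i : WithBot ι) ≤ t} < #ι := by
    cases t with
    | bot => simpa using aleph0_pos.trans hι
    | coe j =>
      simp only [WithBot.coe_le_coe]
      exact mk_Iic_lt j hord hι.le
  calc #{x | b.leadingIndex x ≤ t} ≤ #(span K (b '' {i | (i : WithBot ι) ≤ t})) :=
        mk_le_mk_of_subset fun _ => b.mem_span_image_of_leadingIndex_le
    _ ≤ max #(b '' {i | (i : WithBot ι) ≤ t}) ℵ₀ := mk_span_le_max _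
    _ < #ι := max_lt (mk_image_le.trans_lt hlower) hι

theorem symmDiff_image_add_preimage_subset {G α : Type*} [AddCommGroup G] {φ : G → α}
    {E : Set G} {g : G} (hφ : ∀ x ∉ E, φ (x + g) = φ x) (T : Set α) :
    symmDiff ((g + ·) '' (φ ⁻¹' T)) (φ ⁻¹' T) ⊆ (g + ·) '' E := by
  intro x hx
  refine ⟨-g + x, by_contra fun hE => ?_, add_neg_cancel_left g x⟩
  have hφx : φ x = φ (-g + x) := by simpa using hφ _ hE
  rw [image_add_left, mem_symmDiff] at hx
  simp only [mem_preimage, hφx] at hx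
  tauto

theorem exists_ratBasis_coloring_continuum_le_inter {ι L : Type} [LinearOrder ι]
    [WellFoundedLT ι] (hι : #ι = 𝔠) (hord : (#ι).ord = typeLT ι) [Nonempty L] (hL : #L ≤ 𝔠) :
    ∃ (b : Module.Basis ι ℚ ℝ) (col : ι → L), ∀ F : Set ℝ, IsClosed F → 0 < volume F →
      ∀ l, 𝔠 ≤ #↥(b '' (col ⁻¹' {l}) ∩ F) := by
  have htask : #({F : Set ℝ // IsClosed F ∧ 0 < volume F} × L × ℝ) = #ι := by
    simp only [mk_prod, Cardinal.lift_id]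
    rw [mk_isClosed_volume_pos_real, mk_real, mul_eq_right aleph0_le_continuum hL (mk_ne_zero L),
      continuum_mul_self, hι]
  obtain ⟨task⟩ := Cardinal.eq.1 htask.symm
  obtain ⟨v, hv, hvF⟩ := exists_linearIndependent_forall_mem (K := ℚ) (fun ξ => (task ξ).1.1)
    fun ξ f => exists_mem_notMem_span_of_max_mk_lt <| by
      have hF := (task ξ).1.2.1.continuum_le_mk_of_measure_pos (task ξ).1.2.2
      exact max_lt (mk_range_le.trans_lt ((mk_Iio_lt ξ hord).trans_le (hι.trans_le hF)))
        (aleph0_lt_continuum.trans_le hF)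
  obtain ⟨b, hvb⟩ := exists_basis_range_subset_of_linearIndependent hv (by rw [mk_real, hι])
  let col : ι → L := fun j =>
    Function.extend v (fun ξ => (task ξ).2.1) (fun _ => Classical.arbitrary L) (b j)
  have hv_mem (ξ : ι) : v ξ ∈ b '' (col ⁻¹' {(task ξ).2.1}) := by
    obtain ⟨j, hj⟩ := hvb (mem_range_self ξ)
    exact ⟨j, by simp [col, hj, hv.injective.extend_apply], hj⟩
  refine ⟨b, col, fun F hF hμ l => ?_⟩
  let pt : ℝ → ℝ := fun t => v (task.symm (⟨F, hF, hμ⟩, l, t))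
  have hpt : Function.Injective pt := fun s t h => by
    simpa using task.symm.injective (hv.injective h)
  have hsub : range pt ⊆ b '' (col ⁻¹' {l}) ∩ F := by
    rintro _ ⟨t, rfl⟩
    constructor
    · simpa using hv_mem (task.symm (⟨F, hF, hμ⟩, l, t))
    · simpa using hvF (task.symm (⟨F, hF, hμ⟩, l, t))
  calc 𝔠 = #(range pt) := by rw [mk_range_eq pt hpt, mk_real]
    _ ≤ _ := mk_le_mk_of_subset hsub

/-- there is a family `(X_i)_{i ∈ [0,1]}` of pairwise disjoint subsets
of `ℝ` such that each `X_i` meets every closed set of positive Lebesgue measure in a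
set of cardinality continuum, and every union `⋃_{i ∈ I'} X_i` is almost invariant
under every translation (the symmetric difference has cardinality `< 𝔠`). -/
theorem stmt10 :
    ∃ X : ↥(Set.Icc (0 : ℝ) 1) → Set ℝ,
      (∀ i i', i ≠ i' → X i ∩ X i' = ∅) ∧
      (∀ i (F : Set ℝ), IsClosed F → 0 < volume F →
        Cardinal.mk ↥(X i ∩ F) = Cardinal.continuum) ∧
      (∀ (I' : Set ↥(Set.Icc (0 : ℝ) 1)) (g : ℝ),
        Cardinal.mk ↥(symmDiff ((fun x => g + x) '' ⋃ i ∈ I', X i) (⋃ i ∈ I', X i))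
          < Cardinal.continuum) := by
  have hι : #((ord 𝔠).ToType) = 𝔠 := by simp
  have hord : (#((ord 𝔠).ToType)).ord = typeLT (ord 𝔠).ToType := by simp
  obtain ⟨b, col, hcol⟩ := exists_ratBasis_coloring_continuum_le_inter hι hord
    (L := Icc (0 : ℝ) 1) ((mk_set_le _).trans_eq mk_real)
  let c : ℝ → Icc (0 : ℝ) 1 :=
    fun x => WithBot.recBotCoe ⟨0, left_mem_Icc.2 zero_le_one⟩ col (b.leadingIndex x)
  refine ⟨fun i => c ⁻¹' {i}, fun i i' h => ?_, fun i F hF hμ => ?_, fun I' g => ?_⟩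
  · exact disjoint_iff_inter_eq_empty.1 ((disjoint_singleton.2 h).preimage c)
  · refine le_antisymm ((mk_set_le _).trans_eq mk_real) ((hcol F hF hμ i).trans ?_)
    refine mk_le_mk_of_subset fun _ ⟨⟨j, hj, hjx⟩, hxF⟩ => ⟨?_, hxF⟩
    simpa [c, ← hjx, b.leadingIndex_self] using hj
  · rw [biUnion_preimage_singleton]
    have hc : ∀ x ∉ {x | b.leadingIndex x ≤ b.leadingIndex g}, c (x + g) = c x := fun x hx => by
      simp only [c, b.leadingIndex_add_of_lt (not_le.1 hx)]
    calc _ ≤ #((g + ·) '' {x | b.leadingIndex x ≤ b.leadingIndex g}) :=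
          mk_le_mk_of_subset (symmDiff_image_add_preimage_subset hc I')
      _ ≤ #{x | b.leadingIndex x ≤ b.leadingIndex g} := mk_image_le
      _ < 𝔠 := (b.mk_setOf_leadingIndex_le_lt hord (hι.symm ▸ aleph0_lt_continuum) _).trans_eq
          hι
end

section
/- If E is an infinite set satisfying card(E^{ℵ₀}) = card(E), then there exists a strictly ℵ₀-independent family (A_i)_{i∈I} of subsets of E with card(I) = 2^{card(E)}. -/
/-!
Hausdorff's construction. Put `Ω = (ℕ → E) × (ℕ → 𝒫 ℕ)` and, for `S ⊆ E`, let `A_S` be the set of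
pairs `(s, σ)` such that the trace `s⁻¹(S)` of `S` along `s` is one of the rows `σ n`.
Given countably many sets `S`, a sequence `s` passing through a point of each symmetric difference
gives them pairwise distinct traces; letting the rows enumerate the traces of the sets chosen
positively, together with a subset of `ℕ` that is no trace at all, yields a point of the required
intersection. The hypothesis `|E^ℵ₀| = |E|` makes `|Ω| = |E|`, so the family transfers to `E`.
-/

universe u

open Cardinal Set

def IsStrictlyCountablyIndependent {ι X : Type*} (A : ι → Set X) : Prop :=
  ∀ J : Set ι, J.Countable → ∀ c : ι → Bool, (⋂ i ∈ J, if c i then A i else (A i)ᶜ).Nonempty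

theorem IsStrictlyCountablyIndependent.preimage {ι X Y : Type*} {A : ι → Set Y}
    (hA : IsStrictlyCountablyIndependent A) {g : X → Y} (hg : g.Surjective) :
    IsStrictlyCountablyIndependent fun i => g ⁻¹' A i := by
  intro J hJ c
  obtain ⟨y, hy⟩ := hA J hJ c
  obtain ⟨x, rfl⟩ := hg y
  refine ⟨x, mem_iInter₂.2 fun i hi => ?_⟩
  have hyi := mem_iInter₂.1 hy i hi
  cases hc : c i <;> simpa [hc] using hyi

theorem Set.Countable.exists_seq_injOn_preimage {X : Type*} [Nonempty X] {F : Set (Set X)}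
    (hF : F.Countable) : ∃ s : ℕ → X, InjOn (s ⁻¹' ·) F := by
  classical
  have hsep : ∀ S T : Set X, S ≠ T → ∃ x, ¬(x ∈ S ↔ x ∈ T) := fun S T h => by
    simpa [Set.ext_iff] using h
  let w : Set X × Set X → X := fun p =>
    if h : p.1 ≠ p.2 then (hsep p.1 p.2 h).choose else Classical.arbitrary X
  obtain ⟨s, hs⟩ := (((hF.prod hF).image w).insert (Classical.arbitrary X)).exists_eq_range
    (insert_nonempty _ _)
  refine ⟨s, fun S hS T hT hST => ?_⟩
  by_contra hne
  obtain ⟨m, hm⟩ : w (S, T) ∈ range s := hs ▸ mem_insert_of_mem _ (mem_image_of_mem w ⟨hS, hT⟩)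
  have hw : ¬(w (S, T) ∈ S ↔ w (S, T) ∈ T) := by
    simpa only [w, dif_pos hne] using (hsep S T hne).choose_spec
  exact hw (hm ▸ (Set.ext_iff.1 hST m : s m ∈ S ↔ s m ∈ T))

theorem Set.Countable.exists_set_nat_notMem {C : Set (Set ℕ)} (hC : C.Countable) :
    ∃ D, D ∉ C := by
  obtain ⟨g, hg⟩ := (hC.insert ∅).exists_eq_range (insert_nonempty _ _)
  obtain ⟨D, hD⟩ := not_forall.1 (Function.cantor_surjective g)
  exact ⟨D, fun h => hD (hg.subset (mem_insert_of_mem _ h))⟩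

def hausdorffSet (X : Type*) (S : Set X) : Set ((ℕ → X) × (ℕ → Set ℕ)) :=
  {p | p.1 ⁻¹' S ∈ range p.2}

theorem isStrictlyCountablyIndependent_hausdorffSet (X : Type*) [Nonempty X] :
    IsStrictlyCountablyIndependent (hausdorffSet X) := by
  intro J hJ c
  obtain ⟨s, hs⟩ := hJ.exists_seq_injOn_preimage
  obtain ⟨D, hD⟩ := (hJ.image (s ⁻¹' ·)).exists_set_nat_notMem
  let rows : Set (Set ℕ) := insert D ((s ⁻¹' ·) '' {S ∈ J | c S})
  have hrows : rows.Countable := ((hJ.mono (sep_subset _ _)).image _).insert D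
  obtain ⟨σ, hσ⟩ := hrows.exists_eq_range (insert_nonempty _ _)
  refine ⟨(s, σ), mem_iInter₂.2 fun S hS => ?_⟩
  cases hc : c S
  · rintro ⟨n, hn⟩
    have hrow : σ n ∈ rows := hσ ▸ mem_range_self n
    rcases hrow with hnD | ⟨T, ⟨hT, hcT⟩, hTn⟩
    · exact hD ⟨S, hS, hn.symm.trans hnD⟩
    · have : T = S := hs hT hS (hTn.trans hn)
      rw [this, hc] at hcT
      exact Bool.false_ne_true hcT
  · change s ⁻¹' S ∈ range σ
    exact hσ ▸ mem_insert_of_mem _ ⟨S, ⟨hS, hc⟩, rfl⟩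

theorem mk_seq_prod_seq_set_nat (E : Type u) [Infinite E] (hcard : #(ℕ → E) = #E) :
    #((ℕ → E) × (ℕ → Set ℕ)) = #E := by
  have hcont : lift.{u} #(ℕ → Set ℕ) ≤ #(ℕ → E) := by
    simp only [mk_arrow, mk_set, lift_uzero, mk_nat, lift_aleph0, lift_two_power, ← power_mul,
      aleph0_mul_aleph0]
    exact power_le_power_right ((natCast_lt_aleph0 (n := 2)).le.trans (aleph0_le_mk E))
  rw [mk_prod, lift_uzero, hcard]
  exact Cardinal.mul_eq_left (aleph0_le_mk E) (hcont.trans hcard.le)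
    (mt lift_eq_zero.1 (mk_ne_zero _))

/-- if `E` is an infinite set with `card(E^ℵ₀) = card(E)`, then there
is a strictly ℵ₀-independent family `(A_i)_{i ∈ I}` of subsets of `E` with
`card(I) = 2^{card(E)}`: for every countable `J ⊆ I` and every choice of `A_i` or its
complement for `i ∈ J`, the corresponding intersection is nonempty. -/
theorem stmt13 (E : Type u) [Infinite E]
    (hcard : Cardinal.mk (ℕ → E) = Cardinal.mk E) :
    ∃ (I : Type u) (A : I → Set E),
      Cardinal.mk I = 2 ^ Cardinal.mk E ∧
      ∀ (J : Set I), J.Countable → ∀ c : I → Bool,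
        (⋂ i ∈ J, (if c i then A i else (A i)ᶜ)).Nonempty := by
  obtain ⟨e⟩ := Cardinal.eq.1 (mk_seq_prod_seq_set_nat E hcard).symm
  exact ⟨Set E, fun S => e ⁻¹' hausdorffSet E S, mk_set,
    (isStrictlyCountablyIndependent_hausdorffSet E).preimage e.surjective⟩
end

section
/- Let E be a set, let G be a group of bijections of E (acting on E) which contains an uncountable subgroup acting freely on E (i.e., a subgroup H with card(H) > ℵ₀ such that every h ∈ H other than the identity has no fixed point in E), and let X be an arbitrary subset of E. Then the following two conditions are equivalent: (1) X is a G-absolutely negligible subset of E; (2) for every countable G-configuration X' of X there exists a sequence (h_k)_{k∈ℕ} of elements of G such that ⋂_{k∈ℕ} h_k(X') = ∅. -/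
/-!
(2) ⇒ (1). The countable `G`-configurations of `X` form a `G`-invariant σ-ideal `𝓘`. Let `μ` be a
`G`-invariant σ-finite measure. Since `𝓘` is closed under countable unions, σ-finiteness gives an
essentially largest `μ`-measurable set `U ∈ 𝓘`; as `G` preserves `μ` and `𝓘`, every translate
`h(U)` contains `U` up to a null set. By (2) some countable intersection `⋂ₖ hₖ(U)` is empty, so
`U`, and with it every measurable member of `𝓘`, is null. Hence `ν(B) := μ(A)` whenever `B Δ A ∈ 𝓘`
is a well-defined `G`-invariant extension of `μ` with `ν(X) = 0`.

(1) ⇒ (2). If every countable intersection of translates of a configuration `X'` is nonempty, these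
intersections generate a proper `G`-invariant filter `F` closed under countable intersections. The
measure that is `1` on members of `F` and `0` on sets whose complement is in `F` is `G`-invariant,
finite and gives `X'` measure `1`; but an invariant extension with `ν(X) = 0` vanishes on
`X' ⊆ ⋃ₖ gₖ(X)`.
-/

open MeasureTheory

universe u

variable {E : Type u}

/-- `μ` is a nonzero σ-finite countably additive measure, defined on a σ-algebra `m`
of subsets of `E`, which is invariant under the group `G` of bijections of `E`. -/
def IsInvariantSigmaFiniteMeasure (G : Subgroup (Equiv.Perm E))
    (m : MeasurableSpace E) (μ : @Measure E m) : Prop :=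
  μ ≠ 0 ∧
  (∃ f : ℕ → Set E, (∀ k, MeasurableSet[m] (f k) ∧ μ (f k) ≠ ⊤) ∧
    (⋃ k, f k) = Set.univ) ∧
  (∀ g : Equiv.Perm E, g ∈ G → ∀ A : Set E, MeasurableSet[m] A →
    MeasurableSet[m] (g '' A) ∧ μ (g '' A) = μ A)

/-- `X ⊆ E` is `G`-absolutely negligible: every `G`-invariant σ-finite measure on `E`
admits a `G`-invariant extension measuring `X` as zero. -/
def IsAbsolutelyNegligible (G : Subgroup (Equiv.Perm E)) (X : Set E) : Prop :=
  ∀ (m : MeasurableSpace E) (μ : @Measure E m),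
    IsInvariantSigmaFiniteMeasure G m μ →
    ∃ (m' : MeasurableSpace E) (ν : @Measure E m'),
      m ≤ m' ∧ MeasurableSet[m'] X ∧
      (∀ A : Set E, MeasurableSet[m] A → ν A = μ A) ∧
      ν X = 0 ∧
      (∀ g : Equiv.Perm E, g ∈ G → ∀ A : Set E, MeasurableSet[m'] A →
        MeasurableSet[m'] (g '' A) ∧ ν (g '' A) = ν A)

/-- `X'` is a countable `G`-configuration of `X`. -/
def IsCountableConfiguration (G : Subgroup (Equiv.Perm E)) (X X' : Set E) : Prop :=
  ∃ g : ℕ → Equiv.Perm E, (∀ k, g k ∈ G) ∧ X' ⊆ ⋃ k, g k '' X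

open Filter Set

namespace MeasureTheory

variable {α : Type*} {m : MeasurableSpace α}

theorem exists_ae_le_of_sUnion_mem_of_isFiniteMeasure (μ : Measure α) [IsFiniteMeasure μ]
    {𝒞 : Set (Set α)} (hne : 𝒞.Nonempty) (hmeas : ∀ s ∈ 𝒞, MeasurableSet s)
    (hunion : ∀ S ⊆ 𝒞, S.Countable → ⋃₀ S ∈ 𝒞) :
    ∃ U ∈ 𝒞, ∀ V ∈ 𝒞, V ≤ᵐ[μ] U := by
  obtain ⟨u, -, hu, hu𝒞⟩ := exists_seq_tendsto_sSup (hne.image μ) (OrderTop.bddAbove _)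
  choose t ht𝒞 htu using hu𝒞
  have hU : ⋃₀ range t ∈ 𝒞 := hunion _ (range_subset_iff.2 ht𝒞) (countable_range t)
  have hmax : ∀ V ∈ 𝒞, μ V ≤ μ (⋃₀ range t) := fun V hV =>
    (le_sSup (mem_image_of_mem μ hV)).trans <| le_of_tendsto' hu fun n =>
      htu n ▸ measure_mono (subset_sUnion_of_mem (mem_range_self n))
  refine ⟨_, hU, fun V hV => ae_le_set.2 ?_⟩
  have hVU : V ∪ ⋃₀ range t ∈ 𝒞 := by
    simpa using hunion _ (pair_subset hV hU) ((countable_singleton _).insert V)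
  rw [← union_sdiff_right, measure_sdiff subset_union_right (hmeas _ hU).nullMeasurableSet
    (measure_ne_top μ _), tsub_eq_zero_of_le (hmax _ hVU)]

theorem exists_ae_le_of_sUnion_mem (μ : Measure α) [SFinite μ]
    {𝒞 : Set (Set α)} (hne : 𝒞.Nonempty) (hmeas : ∀ s ∈ 𝒞, MeasurableSet s)
    (hunion : ∀ S ⊆ 𝒞, S.Countable → ⋃₀ S ∈ 𝒞) :
    ∃ U ∈ 𝒞, ∀ V ∈ 𝒞, V ≤ᵐ[μ] U := by
  simpa only [Filter.EventuallyLE, ae_toFinite] using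
    exists_ae_le_of_sUnion_mem_of_isFiniteMeasure μ.toFinite hne hmeas hunion

end MeasureTheory

namespace MeasurableSpace

variable {α : Type*}

/-- `l` stands for the σ-ideal `{Z | Zᶜ ∈ l}`: the measurable sets are those that differ from an
`m`-measurable set by a member of that ideal. -/
@[reducible]
def modFilter (m : MeasurableSpace α) (l : Filter α) [CountableInterFilter l] :
    MeasurableSpace α where
  MeasurableSet' s := ∃ t, MeasurableSet[m] t ∧ s =ᶠ[l] t
  measurableSet_empty := ⟨∅, .empty, .rfl⟩
  measurableSet_compl _ := fun ⟨t, ht, hst⟩ => ⟨tᶜ, ht.compl, hst.compl⟩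
  measurableSet_iUnion _ hs := by
    choose t ht hst using hs
    exact ⟨⋃ i, t i, .iUnion ht, Filter.EventuallyEq.countable_iUnion hst⟩

theorem le_modFilter (m : MeasurableSpace α) (l : Filter α) [CountableInterFilter l] :
    m ≤ m.modFilter l :=
  fun s hs => ⟨s, hs, .rfl⟩

end MeasurableSpace

namespace MeasureTheory

variable {α : Type*} {m : MeasurableSpace α} {l : Filter α} [CountableInterFilter l]

theorem Measure.exists_modFilter_extension (μ : Measure α)
    (hl : ∀ s, MeasurableSet s → s =ᶠ[l] (∅ : Set α) → μ s = 0) :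
    ∃ ν : @Measure α (m.modFilter l), ∀ s t : Set α, MeasurableSet t → s =ᶠ[l] t → ν s = μ t := by
  have hcongr : ∀ s t : Set α, MeasurableSet s → MeasurableSet t → s =ᶠ[l] t → μ s = μ t :=
    fun s t hs ht hst => measure_congr <| ae_eq_set.2
      ⟨hl _ (hs.diff ht) (by simpa using hst.diff (EventuallyEq.refl l t)),
       hl _ (ht.diff hs) (by simpa using hst.symm.diff (EventuallyEq.refl l s))⟩
  have hspec : ∀ s (hs : MeasurableSet[m.modFilter l] s),
      MeasurableSet (Classical.choose hs) ∧ s =ᶠ[l] Classical.choose hs :=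
    fun s hs => Classical.choose_spec hs
  let ν : @Measure α (m.modFilter l) := @Measure.ofMeasurable α (m.modFilter l)
    (fun s hs => μ (Classical.choose hs))
    ((hcongr _ _ (hspec ∅ _).1 .empty (hspec ∅ _).2.symm).trans measure_empty)
    (fun f hf hd => by
      rw [hcongr _ _ (hspec _ _).1 (.iUnion fun i => (hspec _ (hf i)).1)
        ((hspec _ _).2.symm.trans (.countable_iUnion fun i => (hspec _ (hf i)).2))]
      refine measure_iUnion₀ (fun i j hij => hl _ ((hspec _ (hf i)).1.inter (hspec _ (hf j)).1) ?_)
        fun i => (hspec _ (hf i)).1.nullMeasurableSet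
      exact (hd hij).inter_eq ▸ (hspec _ (hf i)).2.symm.inter (hspec _ (hf j)).2.symm)
  refine ⟨ν, fun s t ht hst => ?_⟩
  have hs : MeasurableSet[m.modFilter l] s := ⟨t, ht, hst⟩
  rw [@Measure.ofMeasurable_apply α (m.modFilter l) _ _ _ s hs]
  exact hcongr _ _ (hspec s hs).1 ht ((hspec s hs).2.symm.trans hst)

theorem MeasurePreserving.modFilter {μ : Measure α} {ν : @Measure α (m.modFilter l)}
    (hν : ∀ s t : Set α, MeasurableSet t → s =ᶠ[l] t → ν s = μ t) {φ : α → α}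
    (hφ : MeasurePreserving φ μ μ) (hφl : Tendsto φ l l) :
    @MeasurePreserving α α (m.modFilter l) (m.modFilter l) φ ν ν := by
  have hpre : ∀ {s t : Set α}, s =ᶠ[l] t → φ ⁻¹' s =ᶠ[l] φ ⁻¹' t := fun h => h.comp_tendsto hφl
  have hmeas : Measurable[m.modFilter l, m.modFilter l] φ := fun s ⟨t, ht, hst⟩ =>
    ⟨φ ⁻¹' t, hφ.measurable ht, hpre hst⟩
  refine @MeasurePreserving.mk α α (m.modFilter l) (m.modFilter l) φ ν ν hmeas
    (@Measure.ext α (m.modFilter l) _ _ fun s ⟨t, ht, hst⟩ => ?_)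
  rw [Measure.map_apply (mα := m.modFilter l) (mβ := m.modFilter l) hmeas ⟨t, ht, hst⟩,
    hν _ _ (hφ.measurable ht) (hpre hst), hφ.measure_preimage ht.nullMeasurableSet,
    hν _ _ ht hst]

end MeasureTheory

namespace Filter

variable {α : Type*} (F : Filter α) [CountableInterFilter F]

@[reducible]
def zeroOneMeasurableSpace : MeasurableSpace α where
  MeasurableSet' s := s ∈ F ∨ sᶜ ∈ F
  measurableSet_empty := .inr (by simp)
  measurableSet_compl s hs := by rwa [compl_compl, or_comm]
  measurableSet_iUnion f hf := by
    by_cases h : ∃ i, f i ∈ F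
    · obtain ⟨i, hi⟩ := h
      exact .inl (mem_of_superset hi (subset_iUnion f i))
    · push Not at h
      exact .inr (compl_iUnion f ▸ countable_iInter_mem.2 fun i => (hf i).resolve_left (h i))

variable [F.NeBot]

open Classical in
theorem ite_iUnion_mem_eq_tsum {f : ℕ → Set α} (hf : ∀ i, f i ∈ F ∨ (f i)ᶜ ∈ F)
    (hd : Pairwise (Function.onFun Disjoint f)) :
    (if ⋃ i, f i ∈ F then 1 else 0 : ENNReal) = ∑' i, if f i ∈ F then 1 else 0 := by
  by_cases h : ∃ i, f i ∈ F
  · obtain ⟨i, hi⟩ := h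
    have hj : ∀ j ≠ i, f j ∉ F := fun j hji hj =>
      F.empty_notMem ((hd hji).inter_eq ▸ inter_mem hj hi)
    rw [if_pos (mem_of_superset hi (subset_iUnion f i)),
      tsum_eq_single i fun j hji => if_neg (hj j hji), if_pos hi]
  · push Not at h
    have hU : (⋃ i, f i)ᶜ ∈ F :=
      compl_iUnion f ▸ countable_iInter_mem.2 fun i => (hf i).resolve_left (h i)
    rw [if_neg fun hU' => F.empty_notMem (inter_compl_self _ ▸ inter_mem hU' hU)]
    simp [h]

open Classical in
noncomputable def zeroOneMeasure : @Measure α F.zeroOneMeasurableSpace :=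
  @Measure.ofMeasurable α F.zeroOneMeasurableSpace (fun s _ => if s ∈ F then 1 else 0)
    (if_neg F.empty_notMem) fun _ hf hd => F.ite_iUnion_mem_eq_tsum hf hd

open Classical in
theorem zeroOneMeasure_apply {s : Set α} (hs : MeasurableSet[F.zeroOneMeasurableSpace] s) :
    F.zeroOneMeasure s = if s ∈ F then 1 else 0 :=
  @Measure.ofMeasurable_apply α F.zeroOneMeasurableSpace _ _ _ s hs

theorem zeroOneMeasure_of_mem {s : Set α} (hs : s ∈ F) : F.zeroOneMeasure s = 1 := by
  rw [zeroOneMeasure_apply F (.inl hs), if_pos hs]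

instance : @IsProbabilityMeasure α F.zeroOneMeasurableSpace F.zeroOneMeasure :=
  ⟨F.zeroOneMeasure_of_mem univ_mem⟩

open Classical in
theorem measurePreserving_zeroOneMeasure {φ : α → α} (hφ : map φ F = F) :
    @MeasurePreserving α α F.zeroOneMeasurableSpace F.zeroOneMeasurableSpace φ
      F.zeroOneMeasure F.zeroOneMeasure := by
  have hmem : ∀ s, φ ⁻¹' s ∈ F ↔ s ∈ F := fun s => by rw [← mem_map, hφ]
  have hmeas : Measurable[F.zeroOneMeasurableSpace, F.zeroOneMeasurableSpace] φ := fun s hs => by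
    simpa only [MeasurableSet, ← preimage_compl, hmem] using hs
  refine @MeasurePreserving.mk α α F.zeroOneMeasurableSpace F.zeroOneMeasurableSpace φ _ _ hmeas
    (@Measure.ext α F.zeroOneMeasurableSpace _ _ fun s hs => ?_)
  rw [Measure.map_apply (mα := F.zeroOneMeasurableSpace) (mβ := F.zeroOneMeasurableSpace) hmeas hs,
    zeroOneMeasure_apply F (hmeas hs), zeroOneMeasure_apply F hs]
  exact if_congr (hmem s) rfl rfl

end Filter

namespace Equiv.Perm

variable {α : Type*}

theorem image_eq_preimage_inv (g : Perm α) (s : Set α) : ⇑g '' s = ⇑g⁻¹ ⁻¹' s :=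
  g.image_eq_preimage_symm s

variable {m : MeasurableSpace α} {μ : Measure α}

theorem measurePreserving_inv_iff {g : Perm α} :
    MeasurePreserving (⇑g⁻¹) μ μ ↔
      ∀ A, MeasurableSet A → MeasurableSet (⇑g '' A) ∧ μ (⇑g '' A) = μ A := by
  simp only [image_eq_preimage_inv]
  refine ⟨fun h A hA => ⟨h.measurable hA, h.measure_preimage hA.nullMeasurableSet⟩,
    fun h => ⟨fun A hA => (h A hA).1, Measure.ext fun A hA => ?_⟩⟩
  rw [Measure.map_apply (fun A hA => (h A hA).1) hA, (h A hA).2]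

theorem forall_measurePreserving_iff_image {G : Subgroup (Perm α)} :
    (∀ g ∈ G, MeasurePreserving (⇑g) μ μ) ↔
      ∀ g ∈ G, ∀ A, MeasurableSet A → MeasurableSet (⇑g '' A) ∧ μ (⇑g '' A) = μ A := by
  simp only [← measurePreserving_inv_iff]
  exact ⟨fun h g hg => h _ (inv_mem hg), fun h g hg => inv_inv g ▸ h _ (inv_mem hg)⟩

end Equiv.Perm

open Equiv.Perm

theorem MeasureTheory.sigmaFinite_iff_exists_cover {α : Type*} {m : MeasurableSpace α}
    {μ : Measure α} :
    SigmaFinite μ ↔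
      ∃ f : ℕ → Set α, (∀ k, MeasurableSet (f k) ∧ μ (f k) ≠ ⊤) ∧ ⋃ k, f k = univ :=
  ⟨fun _ => ⟨spanningSets μ, fun k => ⟨measurableSet_spanningSets μ k,
      (measure_spanningSets_lt_top μ k).ne⟩, iUnion_spanningSets μ⟩,
    fun ⟨f, hf, hU⟩ => ⟨⟨⟨f, fun _ => trivial, fun k => (hf k).2.lt_top, hU⟩⟩⟩⟩

theorem isInvariantSigmaFiniteMeasure_iff {G : Subgroup (Equiv.Perm E)} {m : MeasurableSpace E}
    {μ : Measure E} :
    IsInvariantSigmaFiniteMeasure G m μ ↔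
      μ ≠ 0 ∧ SigmaFinite μ ∧ ∀ g ∈ G, MeasurePreserving (⇑g) μ μ := by
  rw [IsInvariantSigmaFiniteMeasure, sigmaFinite_iff_exists_cover,
    forall_measurePreserving_iff_image]

def translatesFilter (G : Subgroup (Equiv.Perm E)) (Y : Set E) : Filter E :=
  countableGenerate ((fun g : Equiv.Perm E => ⇑g '' Y) '' G)

section translatesFilter

variable {G : Subgroup (Equiv.Perm E)} {Y : Set E}

instance : CountableInterFilter (translatesFilter G Y) :=
  inferInstanceAs (CountableInterFilter (countableGenerate _))

theorem image_mem_translatesFilter {g : Equiv.Perm E} (hg : g ∈ G) :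
    ⇑g '' Y ∈ translatesFilter G Y :=
  CountableGenerateSets.basic ⟨g, hg, rfl⟩

theorem self_mem_translatesFilter : Y ∈ translatesFilter G Y := by
  simpa using image_mem_translatesFilter (Y := Y) (one_mem G)

theorem mem_translatesFilter_iff {A : Set E} :
    A ∈ translatesFilter G Y ↔
      ∃ h : ℕ → Equiv.Perm E, (∀ k, h k ∈ G) ∧ ⋂ k, ⇑(h k) '' Y ⊆ A := by
  refine ⟨fun hA => ?_, fun ⟨h, hG, hA⟩ => mem_of_superset
    (countable_iInter_mem.2 fun k => image_mem_translatesFilter (hG k)) hA⟩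
  obtain ⟨S, hSG, hSc, hSA⟩ := mem_countableGenerate_iff.1 hA
  -- `Y = 1 '' Y` is added to make the family nonempty, so that it can be enumerated
  obtain ⟨t, ht⟩ := (hSc.insert Y).exists_eq_range (insert_nonempty _ _)
  have hgen : range t ⊆ (fun g : Equiv.Perm E => ⇑g '' Y) '' G :=
    ht ▸ insert_subset ⟨1, one_mem G, by simp⟩ hSG
  choose h hG hh using fun k => hgen (mem_range_self k)
  refine ⟨h, hG, ?_⟩
  calc ⋂ k, ⇑(h k) '' Y = ⋂₀ insert Y S := by rw [ht, sInter_range]; simp only [hh]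
    _ ⊆ ⋂₀ S := sInter_subset_sInter (subset_insert _ _)
    _ ⊆ A := hSA

theorem tendsto_translatesFilter {g : Equiv.Perm E} (hg : g ∈ G) :
    Tendsto (⇑g) (translatesFilter G Y) (translatesFilter G Y) := by
  refine le_countableGenerate_iff_of_countableInterFilter.2 ?_
  rintro _ ⟨h, hh, rfl⟩
  have : ⇑g ⁻¹' (⇑h '' Y) = ⇑(g⁻¹ * h) '' Y := by
    rw [coe_mul, image_comp, image_eq_preimage_inv g⁻¹, inv_inv]
  exact mem_map.2 (this ▸ image_mem_translatesFilter (mul_mem (inv_mem hg) hh))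

theorem map_translatesFilter {g : Equiv.Perm E} (hg : g ∈ G) :
    map (⇑g) (translatesFilter G Y) = translatesFilter G Y := by
  refine le_antisymm (tendsto_translatesFilter hg) ?_
  calc translatesFilter G Y = map (⇑g) (map (⇑g⁻¹) (translatesFilter G Y)) := by
        rw [map_map, ← coe_mul, mul_inv_cancel, coe_one, map_id]
    _ ≤ map (⇑g) (translatesFilter G Y) := map_mono (tendsto_translatesFilter (inv_mem hg))

theorem compl_mem_translatesFilter_compl_iff {X s : Set E} :
    sᶜ ∈ translatesFilter G Xᶜ ↔ IsCountableConfiguration G X s := by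
  simp only [mem_translatesFilter_iff, IsCountableConfiguration,
    image_compl_eq (Equiv.bijective _), ← compl_iUnion, compl_subset_compl]

end translatesFilter

theorem measure_eq_zero_of_compl_mem {m : MeasurableSpace E} {μ : Measure E} [SigmaFinite μ]
    {G : Subgroup (Equiv.Perm E)} {l : Filter E} [CountableInterFilter l]
    (hG : ∀ g ∈ G, MeasurePreserving (⇑g) μ μ) (hl : ∀ g ∈ G, Tendsto (⇑g) l l)
    (hempty : ∀ U, Uᶜ ∈ l → ∃ h : ℕ → Equiv.Perm E, (∀ k, h k ∈ G) ∧ ⋂ k, ⇑(h k) '' U = ∅)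
    {s : Set E} (hs : MeasurableSet s) (hsl : sᶜ ∈ l) : μ s = 0 := by
  obtain ⟨U, ⟨hUm, hUl⟩, hmax⟩ := exists_ae_le_of_sUnion_mem μ
    (𝒞 := {U | MeasurableSet U ∧ Uᶜ ∈ l}) ⟨s, hs, hsl⟩ (fun _ h => h.1)
    fun S hS hSc => ⟨.sUnion hSc fun t ht => (hS ht).1, compl_sUnion S ▸
      (countable_sInter_mem (hSc.image _)).2 (by rintro _ ⟨t, ht, rfl⟩; exact (hS ht).2)⟩
  have hinv : ∀ g ∈ G, U ≤ᵐ[μ] ⇑g '' U := by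
    intro g hg
    -- maximality of `U` against `g⁻¹ U`, pulled back along `g⁻¹`
    have hpre : ⇑g ⁻¹' U ≤ᵐ[μ] U := hmax _ ⟨(hG g hg).measurable hUm, hl g hg hUl⟩
    simpa [image_eq_preimage_inv, preimage_preimage] using
      (hG _ (inv_mem hg)).quasiMeasurePreserving.preimage_mono_ae hpre
  obtain ⟨h, hhG, hh⟩ := hempty U hUl
  have hUh : ⋂ _ : ℕ, U ≤ᵐ[μ] ⋂ k, ⇑(h k) '' U :=
    Filter.EventuallyLE.countable_iInter fun k => hinv (h k) (hhG k)
  rw [iInter_const] at hUh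
  have hsU : s ≤ᵐ[μ] ⋂ k, ⇑(h k) '' U := (hmax s ⟨hs, hsl⟩).trans hUh
  simpa [hh] using ae_le_set.1 hsU

theorem isAbsolutelyNegligible_of_forall_exists_iInter_image_eq_empty
    {G : Subgroup (Equiv.Perm E)} {X : Set E}
    (hX : ∀ X' : Set E, IsCountableConfiguration G X X' →
      ∃ h : ℕ → Equiv.Perm E, (∀ k, h k ∈ G) ∧ (⋂ k, h k '' X') = ∅) :
    IsAbsolutelyNegligible G X := by
  intro m μ hμ
  obtain ⟨-, hσ, hG⟩ := isInvariantSigmaFiniteMeasure_iff.1 hμ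
  have hl : ∀ g ∈ G, Tendsto (⇑g) (translatesFilter G Xᶜ) (translatesFilter G Xᶜ) :=
    fun g hg => tendsto_translatesFilter hg
  obtain ⟨ν, hν⟩ := μ.exists_modFilter_extension fun s hs hsl =>
    measure_eq_zero_of_compl_mem hG hl
      (fun U hU => hX U (compl_mem_translatesFilter_compl_iff.1 hU)) hs (eventuallyEq_empty.1 hsl)
  have hX0 : X =ᶠ[translatesFilter G Xᶜ] (∅ : Set E) :=
    eventuallyEq_empty.2 self_mem_translatesFilter
  refine ⟨m.modFilter _, ν, m.le_modFilter _, ⟨∅, .empty, hX0⟩, fun A hA => hν A A hA .rfl,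
    (hν X ∅ .empty hX0).trans measure_empty, ?_⟩
  exact forall_measurePreserving_iff_image.1 fun g hg => (hG g hg).modFilter hν (hl g hg)

theorem IsAbsolutelyNegligible.exists_iInter_image_eq_empty {G : Subgroup (Equiv.Perm E)}
    {X X' : Set E} (hX : IsAbsolutelyNegligible G X) (hX' : IsCountableConfiguration G X X') :
    ∃ h : ℕ → Equiv.Perm E, (∀ k, h k ∈ G) ∧ (⋂ k, h k '' X') = ∅ := by
  by_contra hne
  have : (translatesFilter G X').NeBot := ⟨fun hbot => hne <| by
    obtain ⟨h, hG, hh⟩ := mem_translatesFilter_iff.1 (empty_mem_iff_bot.2 hbot)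
    exact ⟨h, hG, subset_empty_iff.1 hh⟩⟩
  set F := translatesFilter G X'
  obtain ⟨m', ν, -, hXm, hext, hX0, hinv⟩ := hX F.zeroOneMeasurableSpace F.zeroOneMeasure <|
    isInvariantSigmaFiniteMeasure_iff.2 ⟨IsProbabilityMeasure.ne_zero _, inferInstance,
      fun g hg => F.measurePreserving_zeroOneMeasure (map_translatesFilter hg)⟩
  have h1 : ν X' = 1 := (hext X' (.inl self_mem_translatesFilter)).trans
    (F.zeroOneMeasure_of_mem self_mem_translatesFilter)
  obtain ⟨g, hg, hX'g⟩ := hX'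
  have h0 : ν X' = 0 := measure_mono_null hX'g <|
    measure_iUnion_null fun k => (hinv _ (hg k) X hXm).2.trans hX0
  exact one_ne_zero (h1.symm.trans h0)

theorem stmt15_general (G : Subgroup (Equiv.Perm E)) (X : Set E) :
    IsAbsolutelyNegligible G X ↔
      ∀ X' : Set E, IsCountableConfiguration G X X' →
        ∃ h : ℕ → Equiv.Perm E, (∀ k, h k ∈ G) ∧ (⋂ k, h k '' X') = ∅ :=
  ⟨fun hX _ => hX.exists_iInter_image_eq_empty,
    isAbsolutelyNegligible_of_forall_exists_iInter_image_eq_empty⟩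

/-- if the group `G` of bijections of `E` contains an uncountable
subgroup acting freely on `E`, then `X ⊆ E` is `G`-absolutely negligible iff for
every countable `G`-configuration `X'` of `X` there is a sequence `(h_k)` in `G`
with `⋂ k, h_k(X') = ∅`. -/
theorem stmt15 (G : Subgroup (Equiv.Perm E))
    (H : Subgroup (Equiv.Perm E)) (hHG : H ≤ G)
    (hH : Cardinal.aleph0 < Cardinal.mk H)
    (hfree : ∀ h : Equiv.Perm E, h ∈ H → h ≠ 1 → ∀ x : E, h x ≠ x)
    (X : Set E) :
    IsAbsolutelyNegligible G X ↔
      ∀ X' : Set E, IsCountableConfiguration G X X' →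
        ∃ h : ℕ → Equiv.Perm E, (∀ k, h k ∈ G) ∧ (⋂ k, h k '' X') = ∅ :=
  stmt15_general G X
end
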